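/- arXiv:1511.02950 — 10 statements merged into one kernel-verified Lean document; each statement's English description precedes it below -/
import Mathlib

section
/- Let (r_α)_{α>0} be a generator of a regularisation method with constant ρ ∈ (0,1) as in condition (i). If there exist an increasing function φ : (0,∞) → (0,∞) and a constant C > 0 such that ‖x_α(y) − x†‖² ≤ C·φ(α) for all α > 0, then e(λ) ≤ (C/(1−ρ)²)·φ(λ) for all λ > 0. (First implication of Proposition 2.4.) -/
/-! For `s ≤ α` condition (i) gives `s * r_α(s) ≤ ρ * √(s / α) ≤ ρ`, so the error function
`(1 - s * r_α(s))²` is at least `(1 - ρ)²` on `(0, α]`. Integrating against `de` over `(0, α]`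
therefore bounds `(1 - ρ)² * e(α)` by `‖x_α(y) - x†‖² ≤ C * φ(α)`; beyond `‖L‖²` the function `e`
is constant, so it suffices to integrate up to `min α ‖L‖²`. -/

open MeasureTheory RealInnerProductSpace Filter

theorem mul_le_of_le_div_sqrt_mul {ρ α s q : ℝ} (hρ : 0 ≤ ρ) (hs : 0 < s) (hsα : s ≤ α)
    (hq : q ≤ ρ / √(α * s)) : s * q ≤ ρ := by
  have hs_le_sqrt : s ≤ √(α * s) :=
    Real.le_sqrt_of_sq_le (by nlinarith)
  have hsqrt_pos : 0 < √(α * s) := hs.trans_le hs_le_sqrt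
  calc s * q ≤ s * (ρ / √(α * s)) := mul_le_mul_of_nonneg_left hq hs.le
    _ = ρ * (s / √(α * s)) := by ring
    _ ≤ ρ * 1 := mul_le_mul_of_nonneg_left ((div_le_one hsqrt_pos).mpr hs_le_sqrt) hρ
    _ = ρ := mul_one ρ

open Set in
theorem StieltjesFunction.mul_sub_le_setIntegral_Ioc (e : StieltjesFunction ℝ) {f : ℝ → ℝ}
    {a m b c : ℝ} (ham : a ≤ m) (hmb : m ≤ b) (hf : IntegrableOn f (Ioc a b) e.measure)
    (hf_nonneg : ∀ s ∈ Ioc a b, 0 ≤ f s) (hcf : ∀ s ∈ Ioc a m, c ≤ f s) :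
    c * (e m - e a) ≤ ∫ s in Ioc a b, f s ∂e.measure := by
  have hmeasure : e.measure (Ioc a m) = ENNReal.ofReal (e m - e a) := e.measure_Ioc a m
  have hconst : ∫ _ in Ioc a m, c ∂e.measure = c * (e m - e a) := by
    rw [setIntegral_const, measureReal_def, hmeasure,
      ENNReal.toReal_ofReal (sub_nonneg.mpr (e.mono ham)), smul_eq_mul, mul_comm]
  calc c * (e m - e a) = ∫ _ in Ioc a m, c ∂e.measure := hconst.symm
    _ ≤ ∫ s in Ioc a m, f s ∂e.measure :=
        setIntegral_mono_on (integrableOn_const (by simp [hmeasure]))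
          (hf.mono_set (Ioc_subset_Ioc_right hmb)) measurableSet_Ioc hcf
    _ ≤ ∫ s in Ioc a b, f s ∂e.measure :=
        setIntegral_mono_set hf ((ae_restrict_iff' measurableSet_Ioc).mpr (ae_of_all _ hf_nonneg))
          (Ioc_subset_Ioc_right hmb).eventuallyLE

theorem statement0_general
    {X : Type*} [NormedAddCommGroup X] [InnerProductSpace ℝ X]
    {Y : Type*} [NormedAddCommGroup Y] [InnerProductSpace ℝ Y]
    (L : X →L[ℝ] Y) (xdag : X)
    (r : ℝ → ℝ → ℝ) (ρ : ℝ) (hρ0 : 0 < ρ) (hρ1 : ρ < 1)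
    (hrcont : ∀ α > (0:ℝ), ContinuousOn (r α) (Set.Ici 0))
    (hrbound : ∀ α > (0:ℝ), ∀ t > (0:ℝ), r α t ≤ min (1 / t) (ρ / Real.sqrt (α * t)))
    (e : StieltjesFunction ℝ) (he0 : e 0 = 0)
    (he_const : ∀ t : ℝ, ‖L‖ ^ 2 ≤ t → e t = e (‖L‖ ^ 2))
    (xa : ℝ → X)
    (hint : ∀ α > (0:ℝ),
      ‖xa α - xdag‖ ^ 2 = ∫ t in Set.Ioc (0:ℝ) (‖L‖ ^ 2), (1 - t * r α t) ^ 2 ∂e.measure)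
    (φ : ℝ → ℝ)
    (C : ℝ)
    (hrate : ∀ α > (0:ℝ), ‖xa α - xdag‖ ^ 2 ≤ C * φ α) :
    ∀ t > (0:ℝ), e t ≤ C / (1 - ρ) ^ 2 * φ t := by
  intro t ht
  have het : e t = e (min t (‖L‖ ^ 2)) := by
    rcases le_total t (‖L‖ ^ 2) with h | h
    · rw [min_eq_left h]
    · rw [he_const t h, min_eq_right h]
  set m := min t (‖L‖ ^ 2)
  have herror_ge : ∀ s ∈ Set.Ioc 0 m, (1 - ρ) ^ 2 ≤ (1 - s * r t s) ^ 2 := fun s hs =>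
    have hsr : s * r t s ≤ ρ := mul_le_of_le_div_sqrt_mul hρ0.le hs.1 (hs.2.trans (min_le_left _ _))
      ((hrbound t ht s hs.1).trans (min_le_right _ _))
    pow_le_pow_left₀ (by linarith) (by linarith) 2
  have herror_int : IntegrableOn (fun s => (1 - s * r t s) ^ 2) (Set.Ioc 0 (‖L‖ ^ 2)) e.measure :=
    ((continuousOn_const.sub (continuousOn_id.mul (hrcont t ht))).pow 2 |>.mono
      Set.Icc_subset_Ici_self).integrableOn_Icc.mono_set Set.Ioc_subset_Icc_self
  have hkey : (1 - ρ) ^ 2 * e m ≤ C * φ t := by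
    have := e.mul_sub_le_setIntegral_Ioc (le_min ht.le (sq_nonneg _)) (min_le_right _ _)
      herror_int (fun s _ => sq_nonneg _) herror_ge
    rw [he0, sub_zero, ← hint t ht] at this
    exact this.trans (hrate t ht)
  rw [het, div_mul_eq_mul_div, le_div_iff₀ (by nlinarith)]
  linarith

theorem statement0
    {X : Type*} [NormedAddCommGroup X] [InnerProductSpace ℝ X] [CompleteSpace X]
    {Y : Type*} [NormedAddCommGroup Y] [InnerProductSpace ℝ Y] [CompleteSpace Y]
    (L : X →L[ℝ] Y) (y : Y) (xdag : X)
    (hsol : L xdag = y) (hmin : ∀ x : X, L x = y → ‖xdag‖ ≤ ‖x‖)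
    (r : ℝ → ℝ → ℝ) (ρ ρt : ℝ) (hρ0 : 0 < ρ) (hρ1 : ρ < 1) (hρt0 : 0 < ρt) (hρt1 : ρt < 1)
    (hrcont : ∀ α > (0:ℝ), ContinuousOn (r α) (Set.Ici 0))
    (hrnonneg : ∀ α > (0:ℝ), ∀ t ∈ Set.Ici (0:ℝ), 0 ≤ r α t)
    (hrbound : ∀ α > (0:ℝ), ∀ t > (0:ℝ), r α t ≤ min (1 / t) (ρ / Real.sqrt (α * t)))
    (hrt_anti : ∀ α > (0:ℝ), AntitoneOn (fun t => (1 - t * r α t) ^ 2) (Set.Ici 0))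
    (hrt_cont : ∀ t ∈ Set.Ici (0:ℝ), ContinuousOn (fun α => (1 - t * r α t) ^ 2) (Set.Ioi 0))
    (hrt_mono : ∀ t ∈ Set.Ici (0:ℝ), MonotoneOn (fun α => (1 - t * r α t) ^ 2) (Set.Ioi 0))
    (hrt_lt : ∀ α > (0:ℝ), (1 - α * r α α) ^ 2 < ρt)
    (e : StieltjesFunction ℝ) (he0 : e 0 = 0)
    (he_const : ∀ t : ℝ, ‖L‖ ^ 2 ≤ t → e t = e (‖L‖ ^ 2))
    (xa : ℝ → X)
    (hint : ∀ α > (0:ℝ),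
      ‖xa α - xdag‖ ^ 2 = ∫ t in Set.Ioc (0:ℝ) (‖L‖ ^ 2), (1 - t * r α t) ^ 2 ∂e.measure)
    (φ : ℝ → ℝ) (hφmono : ∀ s t : ℝ, 0 < s → s ≤ t → φ s ≤ φ t)
    (hφpos : ∀ t > (0:ℝ), 0 < φ t)
    (C : ℝ) (hC : 0 < C)
    (hrate : ∀ α > (0:ℝ), ‖xa α - xdag‖ ^ 2 ≤ C * φ α) :
    ∀ t > (0:ℝ), e t ≤ C / (1 - ρ) ^ 2 * φ t :=
  statement0_general L xdag r ρ hρ0 hρ1 hrcont hrbound e he0 he_const xa hint φ C hrate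
end

section
/- Let (r_α)_{α>0} be a generator of a regularisation method, and assume there exist an increasing function φ : (0,∞) → (0,∞), constants μ ∈ (0,1) and A > 0 such that φ(λ)·ṙ_α(λ)^μ ≤ A·φ(α) for all λ > 0 and all α > 0. If there exists C̃ > 0 with e(λ) ≤ C̃·φ(λ) for all λ > 0, then there exists C > 0 (explicitly C = (A^{1/μ}/φ(‖L‖²))·‖x†‖² + C̃ + A·C̃·ρ̃^{1−μ}/(1−μ)) such that ‖x_α(y) − x†‖² ≤ C·φ(α) for all α > 0. (Second implication of Proposition 2.4.) -/
/-!
Split the error integral at `α`. On `(0, α]` the error function is at most `1`, so that part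
is at most `e(α) ≤ C̃ φ(α)`. On `(α, ‖L‖²]` use the layer cake formula: the error function is
below `ρ̃` there, and for `0 < s < ρ̃` its superlevel set `{s < ṙ_α}` consists of points `λ` with
`e(λ) ≤ C̃ φ(λ) ≤ C̃ A φ(α) s^{-μ}` (by the qualification inequality), so its measure is at most
`C̃ A φ(α) s^{-μ}`. Integrating over `s ∈ (0, ρ̃)` gives `A C̃ ρ̃^{1-μ} φ(α) / (1 - μ)`.
-/

open MeasureTheory RealInnerProductSpace Filter Set

theorem lintegral_le_of_meas_lt_le_rpow {Ω : Type*} [MeasurableSpace Ω] {ν : Measure Ω}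
    {g : Ω → ℝ} (hg0 : 0 ≤ᵐ[ν] g) (hg : AEMeasurable g ν) {c ρ p : ℝ} (hc : 0 ≤ c)
    (hρ : 0 ≤ ρ) (hp : p < 1)
    (hsmall : ∀ s ∈ Ioo 0 ρ, ν {x | s < g x} ≤ ENNReal.ofReal (c * s ^ (-p)))
    (hlarge : ∀ s, ρ ≤ s → ν {x | s < g x} = 0) :
    ∫⁻ x, ENNReal.ofReal (g x) ∂ν ≤ ENNReal.ofReal (c * (ρ ^ (1 - p) / (1 - p))) := by
  have hexp : -1 < -p := by linarith
  have hintegrable : IntegrableOn (fun s => c * s ^ (-p)) (Ioo 0 ρ) := by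
    have := (intervalIntegral.intervalIntegrable_rpow' hexp).const_mul c (a := 0) (b := ρ)
    rw [intervalIntegrable_iff_integrableOn_Ioc_of_le hρ] at this
    exact this.mono_set Ioo_subset_Ioc_self
  have hintegral : ∫ s in Ioo 0 ρ, c * s ^ (-p) = c * (ρ ^ (1 - p) / (1 - p)) := by
    rw [← integral_Ioc_eq_integral_Ioo, ← intervalIntegral.integral_of_le hρ,
      intervalIntegral.integral_const_mul, integral_rpow (Or.inl hexp),
      Real.zero_rpow (by linarith)]
    ring_nf
  have hnonneg : 0 ≤ᵐ[volume.restrict (Ioo 0 ρ)] fun s => c * s ^ (-p) := by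
    filter_upwards [ae_restrict_mem measurableSet_Ioo] with s hs
    exact mul_nonneg hc (Real.rpow_nonneg hs.1.le _)
  calc ∫⁻ x, ENNReal.ofReal (g x) ∂ν = ∫⁻ s in Ioi 0, ν {x | s < g x} :=
        lintegral_eq_lintegral_meas_lt ν hg0 hg
    _ ≤ ∫⁻ s in Ioi 0, (Ioo 0 ρ).indicator (fun s => ENNReal.ofReal (c * s ^ (-p))) s := by
        refine setLIntegral_mono' measurableSet_Ioi fun s hs => ?_
        by_cases hsρ : s < ρ
        · rw [indicator_of_mem (show s ∈ Ioo 0 ρ from ⟨hs, hsρ⟩)]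
          exact hsmall s ⟨hs, hsρ⟩
        · rw [hlarge s (not_lt.1 hsρ)]
          exact zero_le
    _ = ∫⁻ s in Ioo 0 ρ, ENNReal.ofReal (c * s ^ (-p)) := by
        rw [lintegral_indicator measurableSet_Ioo, Measure.restrict_restrict measurableSet_Ioo,
          inter_eq_left.2 Ioo_subset_Ioi_self]
    _ = ENNReal.ofReal (c * (ρ ^ (1 - p) / (1 - p))) := by
        rw [← hintegral, ofReal_integral_eq_lintegral_ofReal hintegrable hnonneg]

namespace StieltjesFunction

variable (e : StieltjesFunction ℝ)

theorem measure_le_of_forall_le {S : Set ℝ} {a K : ℝ} (hSa : S ⊆ Ioi a) (hS : BddAbove S)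
    (hK : ∀ t ∈ S, e t ≤ K) : e.measure S ≤ ENNReal.ofReal (K - e a) := by
  rcases S.eq_empty_or_nonempty with rfl | hne
  · simp
  set u := sSup S
  have hSu : ∀ t ∈ S, t ≤ u := fun t ht => le_csSup hS ht
  by_cases hu : u ∈ S
  · calc e.measure S ≤ e.measure (Ioc a u) := measure_mono fun t ht => ⟨hSa ht, hSu t ht⟩
      _ = ENNReal.ofReal (e u - e a) := e.measure_Ioc a u
      _ ≤ ENNReal.ofReal (K - e a) := ENNReal.ofReal_le_ofReal (by linarith [hK u hu])
  · have hleft : Function.leftLim e u ≤ K := by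
      refine le_of_tendsto (e.mono.tendsto_leftLim u) ?_
      filter_upwards [self_mem_nhdsWithin] with t ht
      obtain ⟨x, hxS, htx⟩ := exists_lt_of_lt_csSup hne ht
      exact (e.mono htx.le).trans (hK x hxS)
    have hSIoo : S ⊆ Ioo a u := fun t ht =>
      ⟨hSa ht, (hSu t ht).lt_of_ne fun htu => hu (htu ▸ ht)⟩
    calc e.measure S ≤ e.measure (Ioo a u) := measure_mono hSIoo
      _ = ENNReal.ofReal (Function.leftLim e u - e a) := e.measure_Ioo
      _ ≤ ENNReal.ofReal (K - e a) := ENNReal.ofReal_le_ofReal (by linarith)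

variable {g : ℝ → ℝ} {α b c ρ p : ℝ}

theorem lintegral_Ioc_le_of_mul_rpow_le (he0 : e 0 = 0) (hα : 0 ≤ α) (hg0 : ∀ t, 0 ≤ g t)
    (hg : AntitoneOn g (Ici α)) (hgα : g α < ρ) (hc : 0 ≤ c) (hp0 : 0 ≤ p) (hp1 : p < 1)
    (hqual : ∀ t ∈ Ioc α b, e t * g t ^ p ≤ c) :
    ∫⁻ t in Ioc α b, ENNReal.ofReal (g t) ∂e.measure
      ≤ ENNReal.ofReal (c * (ρ ^ (1 - p) / (1 - p))) := by
  have hg_le : ∀ t ∈ Ioc α b, g t ≤ g α := fun t ht => hg self_mem_Ici ht.1.le ht.1.le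
  refine lintegral_le_of_meas_lt_le_rpow (ae_of_all _ hg0)
    (aemeasurable_restrict_of_antitoneOn measurableSet_Ioc
      (hg.mono (Ioc_subset_Ioi_self.trans Ioi_subset_Ici_self))) hc
    ((hg0 α).trans hgα.le) hp1 (fun s hs => ?_) (fun s hs => ?_)
  · rw [Measure.restrict_apply' measurableSet_Ioc]
    have hlevel : ∀ t ∈ {t | s < g t} ∩ Ioc α b, e t ≤ c * s ^ (-p) := by
      rintro t ⟨hst, ht⟩
      have het : 0 ≤ e t := he0 ▸ e.mono (hα.trans ht.1.le)
      have hsp : 0 < s ^ p := Real.rpow_pos_of_pos hs.1 p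
      rw [Real.rpow_neg hs.1.le, ← div_eq_mul_inv, le_div_iff₀ hsp]
      calc e t * s ^ p ≤ e t * g t ^ p :=
            mul_le_mul_of_nonneg_left (Real.rpow_le_rpow hs.1.le hst.le hp0) het
        _ ≤ c := hqual t ht
    simpa [he0] using e.measure_le_of_forall_le (a := 0)
      (fun t ht => hα.trans_lt ht.2.1) ⟨b, fun t ht => ht.2.2⟩ hlevel
  · rw [Measure.restrict_apply' measurableSet_Ioc]
    refine measure_mono_null (fun t ⟨hst, ht⟩ => ?_) measure_empty
    exact (lt_irrefl _) ((hst.trans_le (hg_le t ht)).trans (hgα.trans_le hs))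

theorem integral_Ioc_le_of_mul_rpow_le (he0 : e 0 = 0) (hα : 0 ≤ α) (hg0 : ∀ t, 0 ≤ g t)
    (hg1 : ∀ t ∈ Ioc 0 α, g t ≤ 1) (hg : AntitoneOn g (Ici α)) (hgα : g α < ρ) (hc : 0 ≤ c)
    (hp0 : 0 ≤ p) (hp1 : p < 1) (hqual : ∀ t ∈ Ioc α b, e t * g t ^ p ≤ c) :
    ∫ t in Ioc 0 b, g t ∂e.measure ≤ e α + c * (ρ ^ (1 - p) / (1 - p)) := by
  have hhead : ∫⁻ t in Ioc 0 α, ENNReal.ofReal (g t) ∂e.measure ≤ ENNReal.ofReal (e α) :=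
    calc ∫⁻ t in Ioc 0 α, ENNReal.ofReal (g t) ∂e.measure ≤ ∫⁻ _ in Ioc 0 α, 1 ∂e.measure :=
          setLIntegral_mono' measurableSet_Ioc fun t ht => ENNReal.ofReal_le_one.2 (hg1 t ht)
      _ = ENNReal.ofReal (e α) := by rw [setLIntegral_one, e.measure_Ioc, he0, sub_zero]
  have htail := e.lintegral_Ioc_le_of_mul_rpow_le he0 hα hg0 hg hgα hc hp0 hp1 hqual
  have heα : 0 ≤ e α := he0 ▸ e.mono hα
  have hρ : 0 ≤ ρ := (hg0 α).trans hgα.le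
  have hp : 0 < 1 - p := by linarith
  calc ∫ t in Ioc 0 b, g t ∂e.measure ≤ ‖∫ t in Ioc 0 b, g t ∂e.measure‖ := Real.le_norm_self _
    _ ≤ (∫⁻ t in Ioc 0 b, ENNReal.ofReal ‖g t‖ ∂e.measure).toReal :=
        norm_integral_le_lintegral_norm _
    _ ≤ e α + c * (ρ ^ (1 - p) / (1 - p)) := by
        refine ENNReal.toReal_le_of_le_ofReal (by positivity) ?_
        simp_rw [Real.norm_of_nonneg (hg0 _)]
        calc ∫⁻ t in Ioc 0 b, ENNReal.ofReal (g t) ∂e.measure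
            ≤ ∫⁻ t in Ioc 0 α ∪ Ioc α b, ENNReal.ofReal (g t) ∂e.measure :=
              lintegral_mono_set Ioc_subset_Ioc_union_Ioc
          _ ≤ _ := lintegral_union_le _ _ _
          _ ≤ _ := add_le_add hhead htail
          _ = _ := (ENNReal.ofReal_add heα (by positivity)).symm

end StieltjesFunction

theorem statement1_general
    {X : Type*} [NormedAddCommGroup X] [InnerProductSpace ℝ X]
    {Y : Type*} [NormedAddCommGroup Y] [InnerProductSpace ℝ Y]
    (L : X →L[ℝ] Y) (xdag : X)
    (r : ℝ → ℝ → ℝ) (ρt : ℝ) (hρt0 : 0 < ρt)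
    (hrt_anti : ∀ α > (0:ℝ), AntitoneOn (fun t => (1 - t * r α t) ^ 2) (Set.Ici 0))
    (hrt_lt : ∀ α > (0:ℝ), (1 - α * r α α) ^ 2 < ρt)
    (e : StieltjesFunction ℝ) (he0 : e 0 = 0)
    (xa : ℝ → X)
    (hint : ∀ α > (0:ℝ),
      ‖xa α - xdag‖ ^ 2 = ∫ t in Set.Ioc (0:ℝ) (‖L‖ ^ 2), (1 - t * r α t) ^ 2 ∂e.measure)
    (hL : L ≠ 0)
    (φ : ℝ → ℝ)
    (hφpos : ∀ t > (0:ℝ), 0 < φ t)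
    (μ A : ℝ) (hμ0 : 0 < μ) (hμ1 : μ < 1) (hA : 0 < A)
    (hqual : ∀ α > (0:ℝ), ∀ t > (0:ℝ), φ t * ((1 - t * r α t) ^ 2) ^ μ ≤ A * φ α)
    (Ct : ℝ) (hCt : 0 < Ct)
    (hdecay : ∀ t > (0:ℝ), e t ≤ Ct * φ t) :
    ∃ C : ℝ, 0 < C ∧
      C = A ^ (1 / μ) / φ (‖L‖ ^ 2) * ‖xdag‖ ^ 2 + Ct + A * Ct * ρt ^ (1 - μ) / (1 - μ) ∧
      ∀ α > (0:ℝ), ‖xa α - xdag‖ ^ 2 ≤ C * φ α := by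
  have hφL : 0 < φ (‖L‖ ^ 2) := hφpos _ (by have := norm_pos_iff.2 hL; positivity)
  have hμ : 0 < 1 - μ := by linarith
  refine ⟨_, by positivity, rfl, fun α hα => ?_⟩
  have hφα := hφpos α hα
  have hg_anti := hrt_anti α hα
  -- the error function equals `1` at `0`, so it is at most `1` on `[0, ∞)`
  have hg1 : ∀ t ∈ Ioc 0 α, (1 - t * r α t) ^ 2 ≤ 1 := fun t ht => by
    simpa using hg_anti self_mem_Ici ht.1.le ht.1.le
  have hmul : ∀ t ∈ Ioc α (‖L‖ ^ 2), e t * ((1 - t * r α t) ^ 2) ^ μ ≤ Ct * (A * φ α) := by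
    intro t ht
    have ht0 : 0 < t := hα.trans ht.1
    calc e t * ((1 - t * r α t) ^ 2) ^ μ ≤ Ct * φ t * ((1 - t * r α t) ^ 2) ^ μ :=
          mul_le_mul_of_nonneg_right (hdecay t ht0) (Real.rpow_nonneg (sq_nonneg _) _)
      _ = Ct * (φ t * ((1 - t * r α t) ^ 2) ^ μ) := by ring
      _ ≤ Ct * (A * φ α) := mul_le_mul_of_nonneg_left (hqual α hα t ht0) hCt.le
  have hT : 0 ≤ A ^ (1 / μ) / φ (‖L‖ ^ 2) * ‖xdag‖ ^ 2 * φ α := by positivity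
  rw [hint α hα]
  calc _ ≤ e α + Ct * (A * φ α) * (ρt ^ (1 - μ) / (1 - μ)) :=
        e.integral_Ioc_le_of_mul_rpow_le he0 hα.le (fun t => sq_nonneg _) hg1
          (hg_anti.mono (Ici_subset_Ici.2 hα.le)) (hrt_lt α hα) (by positivity) hμ0.le hμ1 hmul
    _ = e α + A * Ct * ρt ^ (1 - μ) / (1 - μ) * φ α := by ring
    _ ≤ _ := by linarith [hdecay α hα]

theorem statement1
    {X : Type*} [NormedAddCommGroup X] [InnerProductSpace ℝ X] [CompleteSpace X]
    {Y : Type*} [NormedAddCommGroup Y] [InnerProductSpace ℝ Y] [CompleteSpace Y]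
    (L : X →L[ℝ] Y) (y : Y) (xdag : X)
    (hsol : L xdag = y) (hmin : ∀ x : X, L x = y → ‖xdag‖ ≤ ‖x‖)
    (r : ℝ → ℝ → ℝ) (ρ ρt : ℝ) (hρ0 : 0 < ρ) (hρ1 : ρ < 1) (hρt0 : 0 < ρt) (hρt1 : ρt < 1)
    (hrcont : ∀ α > (0:ℝ), ContinuousOn (r α) (Set.Ici 0))
    (hrnonneg : ∀ α > (0:ℝ), ∀ t ∈ Set.Ici (0:ℝ), 0 ≤ r α t)
    (hrbound : ∀ α > (0:ℝ), ∀ t > (0:ℝ), r α t ≤ min (1 / t) (ρ / Real.sqrt (α * t)))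
    (hrt_anti : ∀ α > (0:ℝ), AntitoneOn (fun t => (1 - t * r α t) ^ 2) (Set.Ici 0))
    (hrt_cont : ∀ t ∈ Set.Ici (0:ℝ), ContinuousOn (fun α => (1 - t * r α t) ^ 2) (Set.Ioi 0))
    (hrt_mono : ∀ t ∈ Set.Ici (0:ℝ), MonotoneOn (fun α => (1 - t * r α t) ^ 2) (Set.Ioi 0))
    (hrt_lt : ∀ α > (0:ℝ), (1 - α * r α α) ^ 2 < ρt)
    (e : StieltjesFunction ℝ) (he0 : e 0 = 0)
    (he_const : ∀ t : ℝ, ‖L‖ ^ 2 ≤ t → e t = e (‖L‖ ^ 2))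
    (xa : ℝ → X)
    (hint : ∀ α > (0:ℝ),
      ‖xa α - xdag‖ ^ 2 = ∫ t in Set.Ioc (0:ℝ) (‖L‖ ^ 2), (1 - t * r α t) ^ 2 ∂e.measure)
    (hL : L ≠ 0)
    (he_norm : e (‖L‖ ^ 2) = ‖xdag‖ ^ 2)
    (φ : ℝ → ℝ) (hφmono : ∀ s t : ℝ, 0 < s → s ≤ t → φ s ≤ φ t)
    (hφpos : ∀ t > (0:ℝ), 0 < φ t)
    (μ A : ℝ) (hμ0 : 0 < μ) (hμ1 : μ < 1) (hA : 0 < A)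
    (hqual : ∀ α > (0:ℝ), ∀ t > (0:ℝ), φ t * ((1 - t * r α t) ^ 2) ^ μ ≤ A * φ α)
    (Ct : ℝ) (hCt : 0 < Ct)
    (hdecay : ∀ t > (0:ℝ), e t ≤ Ct * φ t) :
    ∃ C : ℝ, 0 < C ∧
      C = A ^ (1 / μ) / φ (‖L‖ ^ 2) * ‖xdag‖ ^ 2 + Ct + A * Ct * ρt ^ (1 - μ) / (1 - μ) ∧
      ∀ α > (0:ℝ), ‖xa α - xdag‖ ^ 2 ≤ C * φ α :=
  statement1_general L xdag r ρt hρt0 hrt_anti hrt_lt e he0 xa hint hL φ hφpos μ A hμ0 hμ1 hA hqual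
    Ct hCt hdecay
end

section
/- Let 0 < ν < μ < 1 and define φ(λ) = |log λ|^{−ν} for λ ∈ (0, e^{−ν/μ}]. Then for every α ∈ (0, e^{−ν/μ}], the function λ ↦ φ(λ)·(α²/(α+λ)²)^μ = |log λ|^{−ν}·α^{2μ}/(α+λ)^{2μ} is decreasing on the interval [α, e^{−ν/μ}); consequently φ(λ)·ṙ_α(λ)^μ ≤ φ(α) for all λ ∈ [α, e^{−ν/μ}), where ṙ_α(λ) = α²/(α+λ)² is the Tikhonov error function. -/
open MeasureTheory RealInnerProductSpace Filter

theorem statement4 (ν μ : ℝ) (hν0 : 0 < ν) (hνμ : ν < μ) (hμ1 : μ < 1) :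
    ∀ α ∈ Set.Ioc (0:ℝ) (Real.exp (-(ν / μ))),
      AntitoneOn (fun t => |Real.log t| ^ (-ν) * α ^ (2 * μ) / (α + t) ^ (2 * μ))
        (Set.Ico α (Real.exp (-(ν / μ))))
      ∧ ∀ t ∈ Set.Ico α (Real.exp (-(ν / μ))),
          |Real.log t| ^ (-ν) * (α ^ 2 / (α + t) ^ 2) ^ μ ≤ |Real.log α| ^ (-ν) := by
  intro α hα
  obtain ⟨hα0, hαE⟩ := hα
  have hμ0 : 0 < μ := hν0.trans hνμ
  set E := Real.exp (-(ν / μ)) with hEdef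
  have hE1 : E < 1 := by
    rw [hEdef, ← Real.exp_zero]
    exact Real.exp_lt_exp.mpr (neg_lt_zero.mpr (div_pos hν0 hμ0))
  have hfacts : ∀ t ∈ Set.Ico α E, 0 < t ∧ 0 < -Real.log t := by
    rintro t ⟨hαt, htE⟩
    have ht0 : 0 < t := hα0.trans_le hαt
    have ht1 : t < 1 := htE.trans hE1
    exact ⟨ht0, neg_pos.mpr (Real.log_neg ht0 ht1)⟩
  set g : ℝ → ℝ := fun t => -ν * Real.log (-Real.log t) - 2 * μ * Real.log (α + t) with hgdef
  have hderiv : ∀ x ∈ interior (Set.Ico α E),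
      HasDerivAt g (-ν * ((-Real.log x)⁻¹ * -x⁻¹) - 2 * μ * ((α + x)⁻¹ * 1)) x := by
    intro x hx
    rw [interior_Ico] at hx
    obtain ⟨hαx, hxE⟩ := hx
    have hx0 : 0 < x := hα0.trans hαx
    have hL : 0 < -Real.log x := (hfacts x ⟨hαx.le, hxE⟩).2
    have hax : 0 < α + x := by linarith
    have h1 : HasDerivAt (fun t => -Real.log t) (-x⁻¹) x := (Real.hasDerivAt_log hx0.ne').neg
    have h2 := (Real.hasDerivAt_log hL.ne').comp x h1
    have h3 := (Real.hasDerivAt_log hax.ne').comp x ((hasDerivAt_id x).const_add α)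
    exact (h2.const_mul (-ν)).sub (h3.const_mul (2 * μ))
  have hg : AntitoneOn g (Set.Ico α E) := by
    apply antitoneOn_of_deriv_nonpos (convex_Ico α E)
    · intro t ht
      obtain ⟨ht0, hL⟩ := hfacts t ht
      have hat : 0 < α + t := by linarith
      have c1 : ContinuousAt (fun t => Real.log (-Real.log t)) t :=
        ((Real.continuousAt_log ht0.ne').neg).log hL.ne'
      have c2 : ContinuousAt (fun t => Real.log (α + t)) t :=
        (continuousAt_const.add continuousAt_id).log hat.ne'
      exact ((continuousAt_const.mul c1).sub (continuousAt_const.mul c2)).continuousWithinAt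
    · intro x hx
      exact (hderiv x hx).differentiableAt.differentiableWithinAt
    · intro x hx
      rw [(hderiv x hx).deriv]
      rw [interior_Ico] at hx
      obtain ⟨hαx, hxE⟩ := hx
      have hx0 : 0 < x := hα0.trans hαx
      have hL : 0 < -Real.log x := (hfacts x ⟨hαx.le, hxE⟩).2
      have hax : 0 < α + x := by linarith
      have hlogx : Real.log x < -(ν / μ) := by
        calc Real.log x < Real.log E := Real.log_lt_log hx0 hxE
        _ = -(ν / μ) := by rw [hEdef, Real.log_exp]
      have hνL : ν < μ * (-Real.log x) := by
        have := (div_lt_iff₀ hμ0).mp (by linarith : ν / μ < -Real.log x)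
        linarith
      have e1 : -ν * ((-Real.log x)⁻¹ * -x⁻¹) - 2 * μ * ((α + x)⁻¹ * 1)
          = ν / (-Real.log x * x) - 2 * μ / (α + x) := by
        rw [div_eq_mul_inv, div_eq_mul_inv, mul_inv]
        ring
      rw [e1, sub_nonpos]
      apply (div_le_div_iff₀ (mul_pos hL hx0) hax).mpr
      nlinarith [mul_pos (sub_pos.mpr hνL) hx0, mul_lt_mul_of_pos_left hαx hν0]
  have heq : ∀ t ∈ Set.Ico α E,
      |Real.log t| ^ (-ν) * α ^ (2 * μ) / (α + t) ^ (2 * μ) = α ^ (2 * μ) * Real.exp (g t) := by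
    intro t ht
    obtain ⟨ht0, hL⟩ := hfacts t ht
    have hat : 0 < α + t := by linarith
    rw [abs_of_neg (by linarith : Real.log t < 0)]
    rw [Real.rpow_def_of_pos hL, Real.rpow_def_of_pos hat, hgdef]
    simp only
    rw [Real.exp_sub, mul_comm (Real.log (-Real.log t)) (-ν), mul_comm (Real.log (α + t)) (2 * μ)]
    ring
  have hfant : AntitoneOn (fun t => |Real.log t| ^ (-ν) * α ^ (2 * μ) / (α + t) ^ (2 * μ))
      (Set.Ico α E) := by
    intro s hs t ht hst
    simp only
    rw [heq s hs, heq t ht]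
    exact mul_le_mul_of_nonneg_left (Real.exp_le_exp.mpr (hg hs ht hst))
      (Real.rpow_nonneg hα0.le _)
  refine ⟨hfant, ?_⟩
  intro t ht
  have hαmem : α ∈ Set.Ico α E := ⟨le_refl _, lt_of_le_of_lt ht.1 ht.2⟩
  have h1 := hfant hαmem ht ht.1
  simp only at h1
  obtain ⟨ht0, hLt⟩ := hfacts t ht
  have hat : 0 < α + t := by linarith
  have key2 : (α ^ 2 / (α + t) ^ 2 : ℝ) ^ μ = α ^ (2 * μ) / (α + t) ^ (2 * μ) := by
    have e : (α ^ 2 / (α + t) ^ 2 : ℝ) = (α / (α + t)) ^ (2 : ℕ) := (div_pow _ _ 2).symm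
    rw [e, ← Real.rpow_natCast (α / (α + t)) 2, ← Real.rpow_mul (by positivity)]
    rw [Real.div_rpow hα0.le hat.le]
    norm_num
  rw [key2]
  have h2 : α ^ (2 * μ) / (α + α) ^ (2 * μ) ≤ 1 := by
    apply div_le_one_of_le₀
    · exact Real.rpow_le_rpow hα0.le (by linarith) (by positivity)
    · positivity
  calc |Real.log t| ^ (-ν) * (α ^ (2 * μ) / (α + t) ^ (2 * μ))
      = |Real.log t| ^ (-ν) * α ^ (2 * μ) / (α + t) ^ (2 * μ) := by ring
    _ ≤ |Real.log α| ^ (-ν) * α ^ (2 * μ) / (α + α) ^ (2 * μ) := h1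
    _ = |Real.log α| ^ (-ν) * (α ^ (2 * μ) / (α + α) ^ (2 * μ)) := by ring
    _ ≤ |Real.log α| ^ (-ν) * 1 :=
        mul_le_mul_of_nonneg_left h2 (Real.rpow_nonneg (abs_nonneg _) _)
    _ = |Real.log α| ^ (-ν) := mul_one _
end

section
/- Let (r_α)_{α>0} be a generator of a regularisation method and suppose ‖x_α(y) − x†‖ > 0 for all α > 0. Then the function A : (0,∞) → (0,∞) defined by A(α) = α·‖x_α(y) − x†‖² is continuous and strictly increasing, with A(α) → 0 as α → 0 and A(α) → ∞ as α → ∞; consequently, for every δ > 0 there exists a unique α_δ > 0 satisfying α_δ·‖x_{α_δ}(y) − x†‖² = δ². -/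
/-!
By properties (ii)–(iii) of the generator and dominated convergence (the integrand `ṙ_α` takes
values in `[0, 1]`), `g(α) = ‖x_α(y) - x†‖² = ∫ ṙ_α de` is a positive, nondecreasing, continuous
function of `α`. Hence `α g(α)` is continuous and strictly increasing. Monotonicity alone also gives
the limits: `g ≤ g 1` on `(0, 1]`, so `α g(α) → 0` as `α → 0`, and `g ≥ g 1 > 0` on `[1, ∞)`, so
`α g(α) → ∞`. The intermediate value theorem then produces `α_δ`, unique by strict monotonicity.
-/

open MeasureTheory RealInnerProductSpace Filter

open Set Topology

section MulSelf

variable {g : ℝ → ℝ}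

theorem strictMonoOn_mul_self_of_monotoneOn (hg : MonotoneOn g (Ioi 0))
    (hpos : ∀ a > 0, 0 < g a) : StrictMonoOn (fun a => a * g a) (Ioi 0) := fun a ha b hb hab =>
  calc a * g a < b * g a := mul_lt_mul_of_pos_right hab (hpos a ha)
    _ ≤ b * g b := mul_le_mul_of_nonneg_left (hg ha hb hab.le) (le_of_lt hb)

theorem tendsto_mul_self_nhdsGT_zero_of_monotoneOn (hg : MonotoneOn g (Ioi 0))
    (hnonneg : ∀ a > 0, 0 ≤ g a) : Tendsto (fun a => a * g a) (𝓝[>] 0) (𝓝 0) := by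
  refine (tendsto_nhdsWithin_of_tendsto_nhds tendsto_id).zero_mul_isBoundedUnder_le
    ⟨g 1, eventually_map.2 ?_⟩
  filter_upwards [Ioo_mem_nhdsGT one_pos] with a ha
  rw [Function.comp_apply, Real.norm_of_nonneg (hnonneg a ha.1)]
  exact hg ha.1 (mem_Ioi.2 one_pos) ha.2.le

theorem tendsto_mul_self_atTop_of_monotoneOn (hg : MonotoneOn g (Ioi 0)) (hpos : 0 < g 1) :
    Tendsto (fun a => a * g a) atTop atTop := by
  refine tendsto_atTop_mono' atTop ?_ (tendsto_id.atTop_mul_const hpos)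
  filter_upwards [eventually_ge_atTop 1] with a ha
  exact mul_le_mul_of_nonneg_left (hg (mem_Ioi.2 one_pos) (one_pos.trans_le ha) ha) (zero_le_one.trans ha)

end MulSelf

theorem existsUnique_pos_eq_of_strictMonoOn {f : ℝ → ℝ} (hcont : ContinuousOn f (Ioi 0))
    (hmono : StrictMonoOn f (Ioi 0)) (h0 : Tendsto f (𝓝[>] 0) (𝓝 0))
    (htop : Tendsto f atTop atTop) {c : ℝ} (hc : 0 < c) : ∃! a, 0 < a ∧ f a = c := by
  obtain ⟨a, hac, ha⟩ := ((h0.eventually_lt_const hc).and self_mem_nhdsWithin).exists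
  obtain ⟨b, hab, hcb⟩ := ((eventually_ge_atTop a).and (htop.eventually_gt_atTop c)).exists
  have hIcc : Icc a b ⊆ Ioi 0 := fun x hx => lt_of_lt_of_le ha hx.1
  obtain ⟨x, hx, hfx⟩ := intermediate_value_Icc hab (hcont.mono hIcc) ⟨hac.le, hcb.le⟩
  exact ⟨x, ⟨hIcc hx, hfx⟩, fun z ⟨hz, hfz⟩ => hmono.injOn hz (hIcc hx) (hfz.trans hfx.symm)⟩

section ErrorFunction

variable {r : ℝ → ℝ → ℝ} {α : ℝ}

def errorFn (r : ℝ → ℝ → ℝ) (α t : ℝ) : ℝ := (1 - t * r α t) ^ 2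

theorem errorFn_nonneg (t : ℝ) : 0 ≤ errorFn r α t := sq_nonneg _

theorem errorFn_le_one {t : ℝ} (ht : 0 < t) (hr0 : 0 ≤ r α t) (hr1 : r α t ≤ 1 / t) :
    errorFn r α t ≤ 1 := by
  have h1 : t * r α t ≤ 1 := by rwa [le_div_iff₀ ht, mul_comm] at hr1
  have h0 : 0 ≤ t * r α t := mul_nonneg ht.le hr0
  exact pow_le_one₀ (by linarith) (by linarith)

variable {μ : Measure ℝ}

theorem aestronglyMeasurable_errorFn (hμ : ∀ᵐ t ∂μ, 0 < t) (hr : ContinuousOn (r α) (Ici 0)) :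
    AEStronglyMeasurable (errorFn r α) μ := by
  rw [← Measure.restrict_eq_self_of_ae_mem (s := Ioi 0) hμ]
  exact ((continuousOn_const.sub (continuousOn_id.mul (hr.mono Ioi_subset_Ici_self))).pow 2
    ).aestronglyMeasurable measurableSet_Ioi

theorem ae_norm_errorFn_le_one (hμ : ∀ᵐ t ∂μ, 0 < t) (hr0 : ∀ t > 0, 0 ≤ r α t)
    (hr1 : ∀ t > 0, r α t ≤ 1 / t) : ∀ᵐ t ∂μ, ‖errorFn r α t‖ ≤ 1 :=
  hμ.mono fun t ht => by
    rw [Real.norm_of_nonneg (errorFn_nonneg t)]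
    exact errorFn_le_one ht (hr0 t ht) (hr1 t ht)

end ErrorFunction

theorem statement7_general
    {X : Type*} [NormedAddCommGroup X] [InnerProductSpace ℝ X]
    {Y : Type*} [NormedAddCommGroup Y] [InnerProductSpace ℝ Y]
    (L : X →L[ℝ] Y) (xdag : X)
    (r : ℝ → ℝ → ℝ) (ρ : ℝ)
    (hrcont : ∀ α > (0:ℝ), ContinuousOn (r α) (Set.Ici 0))
    (hrnonneg : ∀ α > (0:ℝ), ∀ t ∈ Set.Ici (0:ℝ), 0 ≤ r α t)
    (hrbound : ∀ α > (0:ℝ), ∀ t > (0:ℝ), r α t ≤ min (1 / t) (ρ / Real.sqrt (α * t)))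
    (hrt_cont : ∀ t ∈ Set.Ici (0:ℝ), ContinuousOn (fun α => (1 - t * r α t) ^ 2) (Set.Ioi 0))
    (hrt_mono : ∀ t ∈ Set.Ici (0:ℝ), MonotoneOn (fun α => (1 - t * r α t) ^ 2) (Set.Ioi 0))
    (e : StieltjesFunction ℝ)
    (xa : ℝ → X)
    (hint : ∀ α > (0:ℝ),
      ‖xa α - xdag‖ ^ 2 = ∫ t in Set.Ioc (0:ℝ) (‖L‖ ^ 2), (1 - t * r α t) ^ 2 ∂e.measure)
    (hpos : ∀ α > (0:ℝ), 0 < ‖xa α - xdag‖) :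
    ContinuousOn (fun a => a * ‖xa a - xdag‖ ^ 2) (Set.Ioi 0)
    ∧ StrictMonoOn (fun a => a * ‖xa a - xdag‖ ^ 2) (Set.Ioi 0)
    ∧ Tendsto (fun a => a * ‖xa a - xdag‖ ^ 2) (nhdsWithin 0 (Set.Ioi 0)) (nhds 0)
    ∧ Tendsto (fun a => a * ‖xa a - xdag‖ ^ 2) atTop atTop
    ∧ ∀ δ > (0:ℝ), ∃! a : ℝ, 0 < a ∧ a * ‖xa a - xdag‖ ^ 2 = δ ^ 2 := by
  set μ := e.measure.restrict (Ioc 0 (‖L‖ ^ 2))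
  have : IsFiniteMeasure μ := ⟨by simp [μ, e.measure_Ioc]⟩
  have hμ : ∀ᵐ t ∂μ, 0 < t := (ae_restrict_mem measurableSet_Ioc).mono fun t ht => ht.1
  have hmeas (α : ℝ) (hα : 0 < α) : AEStronglyMeasurable (errorFn r α) μ :=
    aestronglyMeasurable_errorFn hμ (hrcont α hα)
  have hle (α : ℝ) (hα : 0 < α) : ∀ᵐ t ∂μ, ‖errorFn r α t‖ ≤ 1 :=
    ae_norm_errorFn_le_one hμ (fun t ht => hrnonneg α hα t ht.le)
      (fun t ht => (hrbound α hα t ht).trans (min_le_left _ _))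
  have hg_eq : EqOn (fun α => ∫ t, errorFn r α t ∂μ) (fun a => ‖xa a - xdag‖ ^ 2) (Ioi 0) :=
    fun α hα => (hint α hα).symm
  have hg_cont : ContinuousOn (fun a => ‖xa a - xdag‖ ^ 2) (Ioi 0) :=
    (continuousOn_of_dominated hmeas hle (integrable_const 1)
      (hμ.mono fun t ht => hrt_cont t ht.le)).congr hg_eq.symm
  have hg_mono : MonotoneOn (fun a => ‖xa a - xdag‖ ^ 2) (Ioi 0) :=
    MonotoneOn.congr (fun a ha b hb hab => integral_mono_ae
      ((integrable_const 1).mono' (hmeas a ha) (hle a ha))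
      ((integrable_const 1).mono' (hmeas b hb) (hle b hb))
      (hμ.mono fun t ht => hrt_mono t ht.le ha hb hab)) hg_eq
  have hg_pos (a : ℝ) (ha : 0 < a) : 0 < ‖xa a - xdag‖ ^ 2 := pow_pos (hpos a ha) 2
  have hcont := continuousOn_id.mul hg_cont
  have hmono := strictMonoOn_mul_self_of_monotoneOn hg_mono hg_pos
  have h0 := tendsto_mul_self_nhdsGT_zero_of_monotoneOn hg_mono fun a ha => (hg_pos a ha).le
  have htop := tendsto_mul_self_atTop_of_monotoneOn hg_mono (hg_pos 1 one_pos)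
  exact ⟨hcont, hmono, h0, htop,
    fun δ hδ => existsUnique_pos_eq_of_strictMonoOn hcont hmono h0 htop (pow_pos hδ 2)⟩

theorem statement7
    {X : Type*} [NormedAddCommGroup X] [InnerProductSpace ℝ X] [CompleteSpace X]
    {Y : Type*} [NormedAddCommGroup Y] [InnerProductSpace ℝ Y] [CompleteSpace Y]
    (L : X →L[ℝ] Y) (y : Y) (xdag : X)
    (hsol : L xdag = y) (hmin : ∀ x : X, L x = y → ‖xdag‖ ≤ ‖x‖)
    (r : ℝ → ℝ → ℝ) (ρ ρt : ℝ) (hρ0 : 0 < ρ) (hρ1 : ρ < 1) (hρt0 : 0 < ρt) (hρt1 : ρt < 1)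
    (hrcont : ∀ α > (0:ℝ), ContinuousOn (r α) (Set.Ici 0))
    (hrnonneg : ∀ α > (0:ℝ), ∀ t ∈ Set.Ici (0:ℝ), 0 ≤ r α t)
    (hrbound : ∀ α > (0:ℝ), ∀ t > (0:ℝ), r α t ≤ min (1 / t) (ρ / Real.sqrt (α * t)))
    (hrt_anti : ∀ α > (0:ℝ), AntitoneOn (fun t => (1 - t * r α t) ^ 2) (Set.Ici 0))
    (hrt_cont : ∀ t ∈ Set.Ici (0:ℝ), ContinuousOn (fun α => (1 - t * r α t) ^ 2) (Set.Ioi 0))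
    (hrt_mono : ∀ t ∈ Set.Ici (0:ℝ), MonotoneOn (fun α => (1 - t * r α t) ^ 2) (Set.Ioi 0))
    (hrt_lt : ∀ α > (0:ℝ), (1 - α * r α α) ^ 2 < ρt)
    (e : StieltjesFunction ℝ) (he0 : e 0 = 0)
    (he_const : ∀ t : ℝ, ‖L‖ ^ 2 ≤ t → e t = e (‖L‖ ^ 2))
    (xa : ℝ → X)
    (hint : ∀ α > (0:ℝ),
      ‖xa α - xdag‖ ^ 2 = ∫ t in Set.Ioc (0:ℝ) (‖L‖ ^ 2), (1 - t * r α t) ^ 2 ∂e.measure)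
    (hpos : ∀ α > (0:ℝ), 0 < ‖xa α - xdag‖) :
    ContinuousOn (fun a => a * ‖xa a - xdag‖ ^ 2) (Set.Ioi 0)
    ∧ StrictMonoOn (fun a => a * ‖xa a - xdag‖ ^ 2) (Set.Ioi 0)
    ∧ Tendsto (fun a => a * ‖xa a - xdag‖ ^ 2) (nhdsWithin 0 (Set.Ioi 0)) (nhds 0)
    ∧ Tendsto (fun a => a * ‖xa a - xdag‖ ^ 2) atTop atTop
    ∧ ∀ δ > (0:ℝ), ∃! a : ℝ, 0 < a ∧ a * ‖xa a - xdag‖ ^ 2 = δ ^ 2 :=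
  statement7_general L xdag r ρ hrcont hrnonneg hrbound hrt_cont hrt_mono e xa hint hpos
end

section
/- Let (r_α)_{α>0} be a generator of a regularisation method with constant ρ̃ ∈ (0,1) as in condition (iv), and suppose ‖x_α(y) − x†‖ > 0 for all α > 0. For δ > 0 let α_δ > 0 be the unique solution of α_δ·‖x_{α_δ}(y) − x†‖² = δ². Then for every δ > 0 such that α_δ belongs to the spectrum σ(LL*) of LL*, one has: sup over ỹ with ‖ỹ − y‖ ≤ δ of the infimum over α > 0 of ‖x_α(ỹ) − x†‖² is at least ((1−√ρ̃)²/2)·δ²/α_δ. (Lower bound of Lemma 3.2.) -/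
/-!
Since `α = α_δ` lies in the spectrum of `LL*`, the spectral projection `F{α}` is nonzero, so it has a
unit vector `w` in its range with `⟪y, w⟫ ≤ 0`; every function `f(LL*)` acts on `w` as `f(α)`.
For the datum `ỹ = y + δ w` the error splits as `x_a(ỹ) - x† = (x_a(y) - x†) + δ r_a(L*L) L* w`, where
`‖r_a(L*L) L* w‖² = α r_a(α)²` and the inner product of the two parts is
`δ r_a(α) (α r_a(α) - 1) ⟪y, w⟫ ≥ 0`. If `a ≤ α`, monotonicity of the error function and (iv) give
`α r_a(α) ≥ 1 - √ρ̃`, so the noise alone contributes `(1 - √ρ̃)² δ²/α`; if `a ≥ α`, the bias is at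
least the bias at `α`, which is `δ²/α` by the choice of `α_δ`.
-/

open MeasureTheory RealInnerProductSpace Filter

section FunctionalCalculus

variable {Y : Type*} [NormedAddCommGroup Y] [NormedSpace ℝ Y] {Φ : (ℝ → ℝ) → (Y →L[ℝ] Y)}

theorem funCalc_const (hadd : ∀ f g : ℝ → ℝ, Φ (fun t => f t + g t) = Φ f + Φ g)
    (hone : Φ (fun _ => 1) = ContinuousLinearMap.id ℝ Y) {S : Set ℝ}
    (hnorm : ∀ f : ℝ → ℝ, ∀ c : ℝ, (∀ t ∈ S, |f t| ≤ c) → ∀ u : Y, ‖Φ f u‖ ≤ c * ‖u‖) (c : ℝ) :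
    Φ (fun _ => c) = c • ContinuousLinearMap.id ℝ Y := by
  let ψ : ℝ →+ (Y →L[ℝ] Y) := AddMonoidHom.mk' (fun c => Φ fun _ => c) fun _ _ => hadd _ _
  have hψ : ∀ c, ‖ψ c‖ ≤ 1 * ‖c‖ := fun c =>
    (ψ c).opNorm_le_bound (by positivity) (hnorm _ _ fun _ _ => by simp)
  simpa [ψ, hone] using map_real_smul ψ (AddMonoidHomClass.continuous_of_bound ψ 1 hψ) c 1

theorem funCalc_indicator_comp_self
    (hmul : ∀ f g : ℝ → ℝ, Φ (fun t => f t * g t) = (Φ f).comp (Φ g)) (s : Set ℝ) :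
    (Φ (s.indicator fun _ => 1)).comp (Φ (s.indicator fun _ => 1)) = Φ (s.indicator fun _ => 1) := by
  rw [← hmul]
  congr 1
  funext t
  by_cases ht : t ∈ s <;> simp [ht]

theorem funCalc_apply_of_indicator_fixed
    (hadd : ∀ f g : ℝ → ℝ, Φ (fun t => f t + g t) = Φ f + Φ g)
    (hmul : ∀ f g : ℝ → ℝ, Φ (fun t => f t * g t) = (Φ f).comp (Φ g))
    (hone : Φ (fun _ => 1) = ContinuousLinearMap.id ℝ Y) {S : Set ℝ}
    (hnorm : ∀ f : ℝ → ℝ, ∀ c : ℝ, (∀ t ∈ S, |f t| ≤ c) → ∀ u : Y, ‖Φ f u‖ ≤ c * ‖u‖)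
    {a : ℝ} {w : Y} (hw : Φ ((Set.Icc a a).indicator fun _ => 1) w = w) (f : ℝ → ℝ) :
    Φ f w = f a • w := by
  set P := Φ ((Set.Icc a a).indicator fun _ => 1)
  have hloc : (fun t => f t * (Set.Icc a a).indicator (fun _ => (1 : ℝ)) t)
      = fun t => f a * (Set.Icc a a).indicator (fun _ => (1 : ℝ)) t := by
    funext t
    by_cases ht : t = a <;> simp [ht]
  calc Φ f w = (Φ f).comp P w := by rw [ContinuousLinearMap.comp_apply, hw]
    _ = (Φ fun _ => f a).comp P w := by rw [← hmul, hloc, hmul]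
    _ = f a • w := by simp [hw, funCalc_const hadd hone hnorm]

end FunctionalCalculus

theorem exists_norm_eq_one_fixed_inner_nonpos {E : Type*} [NormedAddCommGroup E]
    [InnerProductSpace ℝ E] {P : E →L[ℝ] E} (hP : P.comp P = P) (hP0 : P ≠ 0) (y : E) :
    ∃ w, ‖w‖ = 1 ∧ P w = w ∧ ⟪y, w⟫ ≤ 0 := by
  obtain ⟨u, hu⟩ : ∃ u, P u ≠ 0 := by
    by_contra! h
    exact hP0 (ContinuousLinearMap.ext h)
  set v := ‖P u‖⁻¹ • P u
  have hv : ‖v‖ = 1 := by simp [v, norm_smul, hu]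
  have hPv : P v = v := by simp [v, ← ContinuousLinearMap.comp_apply, hP]
  rcases le_total ⟪y, v⟫ 0 with h | h
  · exact ⟨v, hv, hPv, h⟩
  · exact ⟨-v, by simpa using hv, by simpa using hPv, by simpa using h⟩

section Regularisation

variable {X Y : Type*} [NormedAddCommGroup X] [InnerProductSpace ℝ X] [CompleteSpace X]
  [NormedAddCommGroup Y] [InnerProductSpace ℝ Y] [CompleteSpace Y]
  {L : X →L[ℝ] Y} {R : X →L[ℝ] X} {G : Y →L[ℝ] Y} {w : Y} {α s : ℝ}

local notation "L†" => ContinuousLinearMap.adjoint L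

theorem norm_sq_apply_adjoint_eigenvector (hR : ∀ u v, ⟪R u, v⟫ = ⟪u, R v⟫)
    (hcomm : L.comp R = G.comp L) (hGw : G w = s • w) (hLw : L (L† w) = α • w) :
    ‖R (L† w)‖ ^ 2 = α * s ^ 2 * ‖w‖ ^ 2 := by
  have hLR : ∀ x, L (R x) = G (L x) := DFunLike.congr_fun hcomm
  calc ‖R (L† w)‖ ^ 2 = ⟪L (R (R (L† w))), w⟫ := by
        rw [← real_inner_self_eq_norm_sq, hR, real_inner_comm,
          ContinuousLinearMap.adjoint_inner_right]
    _ = α * s ^ 2 * ‖w‖ ^ 2 := by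
        rw [hLR, hLR, hLw]
        simp only [map_smul, hGw, real_inner_smul_left, real_inner_self_eq_norm_sq]
        ring

theorem inner_bias_apply_adjoint_eigenvector (hR : ∀ u v, ⟪R u, v⟫ = ⟪u, R v⟫)
    (hG : ∀ u v, ⟪G u, v⟫ = ⟪u, G v⟫) (hcomm : L.comp R = G.comp L) (hGw : G w = s • w)
    (hLw : L (L† w) = α • w) (x : X) :
    ⟪R (L† (L x)) - x, R (L† w)⟫ = s * (α * s - 1) * ⟪L x, w⟫ := by
  have hLR : ∀ x, L (R x) = G (L x) := DFunLike.congr_fun hcomm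
  have hLL : ∀ u, ⟪L (L† u), w⟫ = ⟪u, L (L† w)⟫ := fun u => by
    rw [← ContinuousLinearMap.adjoint_inner_left, ContinuousLinearMap.adjoint_inner_right]
  calc ⟪R (L† (L x)) - x, R (L† w)⟫ = ⟪G (G (L (L† (L x)))) - G (L x), w⟫ := by
        rw [← hR, ContinuousLinearMap.adjoint_inner_right, hLR, map_sub, hLR, map_sub]
    _ = s * (α * s - 1) * ⟪L x, w⟫ := by
        rw [inner_sub_left, hG, hG, hG, hGw, map_smul, hGw, smul_smul, real_inner_smul_right, hLL,
          hLw]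
        simp only [real_inner_smul_right]
        ring

theorem norm_sq_perturbed_error (hR : ∀ u v, ⟪R u, v⟫ = ⟪u, R v⟫)
    (hG : ∀ u v, ⟪G u, v⟫ = ⟪u, G v⟫) (hcomm : L.comp R = G.comp L) (hGw : G w = s • w)
    (hLw : L (L† w) = α • w) (x : X) (δ : ℝ) :
    ‖R (L† (L x + δ • w)) - x‖ ^ 2 = ‖R (L† (L x)) - x‖ ^ 2
      + 2 * δ * (s * (α * s - 1) * ⟪L x, w⟫) + δ ^ 2 * (α * s ^ 2 * ‖w‖ ^ 2) := by
  have hsplit : R (L† (L x + δ • w)) - x = (R (L† (L x)) - x) + δ • R (L† w) := by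
    simp only [map_add, map_smul]
    abel
  rw [hsplit, norm_add_sq_real, real_inner_smul_right, norm_smul, mul_pow, Real.norm_eq_abs, sq_abs,
    inner_bias_apply_adjoint_eigenvector hR hG hcomm hGw hLw,
    norm_sq_apply_adjoint_eigenvector hR hcomm hGw hLw]
  ring

end Regularisation

theorem one_sub_sqrt_sq_div_le_mul_sq {α s ρ : ℝ} (hα : 0 < α) (hρ : ρ ≤ 1) (hs : α * s ≤ 1)
    (h : (1 - α * s) ^ 2 ≤ ρ) : (1 - √ρ) ^ 2 / α ≤ α * s ^ 2 := by
  have hsqrt : 1 - α * s ≤ √ρ := by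
    simpa [abs_of_nonneg (sub_nonneg.mpr hs)] using Real.abs_le_sqrt h
  have hsqrt1 : √ρ ≤ 1 := Real.sqrt_le_one.mpr hρ
  rw [div_le_iff₀ hα]
  nlinarith

theorem half_mul_div_le_of_bias_or_noise {B C N δ α c : ℝ} (hα : 0 < α) (hδ : 0 ≤ δ)
    (hB : 0 ≤ B) (hN : 0 ≤ N) (hC : 0 ≤ C) (hc : c ≤ 1) (h : δ ^ 2 / α ≤ B ∨ c / α ≤ N) :
    c / 2 * (δ ^ 2 / α) ≤ B + 2 * δ * C + δ ^ 2 * N := by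
  have hD : 0 ≤ δ ^ 2 / α := by positivity
  have hδC : 0 ≤ 2 * δ * C := by positivity
  have hδN : 0 ≤ δ ^ 2 * N := by positivity
  rcases h with h | h
  · nlinarith
  · have hscaled := mul_le_mul_of_nonneg_left h (sq_nonneg δ)
    rw [show c / 2 * (δ ^ 2 / α) = δ ^ 2 * (c / α) / 2 by ring]
    nlinarith

theorem monotoneOn_setIntegral_Ioc {μ : Measure ℝ} [IsFiniteMeasureOnCompacts μ] {A B : ℝ}
    {g : ℝ → ℝ → ℝ} {s : Set ℝ} (hcont : ∀ a ∈ s, ContinuousOn (g a) (Set.Icc A B))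
    (hmono : ∀ t ∈ Set.Ioc A B, MonotoneOn (fun a => g a t) s) :
    MonotoneOn (fun a => ∫ t in Set.Ioc A B, g a t ∂μ) s := by
  intro a ha b hb hab
  have hint : ∀ c ∈ s, IntegrableOn (g c) (Set.Ioc A B) μ := fun c hc =>
    ((hcont c hc).integrableOn_Icc).mono_set Set.Ioc_subset_Icc_self
  exact setIntegral_mono_on (hint a ha) (hint b hb) measurableSet_Ioc
    fun t ht => hmono t ht ha hb hab

theorem bddAbove_range_ciInf_of_nonneg {ι κ : Type*} {f : ι → κ → ℝ} (h0 : ∀ i k, 0 ≤ f i k)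
    (k : κ) (hb : BddAbove (Set.range fun i => f i k)) :
    BddAbove (Set.range fun i => ⨅ k, f i k) :=
  hb.range_mono _ fun i => ciInf_le ⟨0, by rintro _ ⟨k, rfl⟩; exact h0 i k⟩ k

theorem bddAbove_range_norm_sq_sub {E F : Type*} [NormedAddCommGroup E] [NormedSpace ℝ E]
    [NormedAddCommGroup F] [NormedSpace ℝ F] (T : E →L[ℝ] F) (x : F) (y : E) (δ : ℝ) :
    BddAbove (Set.range fun z : {z : E // ‖z - y‖ ≤ δ} => ‖T z - x‖ ^ 2) := by
  refine ⟨(‖T‖ * (‖y‖ + δ) + ‖x‖) ^ 2, ?_⟩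
  rintro _ ⟨⟨z, hz⟩, rfl⟩
  have hz' : ‖z‖ ≤ ‖y‖ + δ := (norm_le_insert' z y).trans (by gcongr)
  have hTz : ‖T z - x‖ ≤ ‖T‖ * (‖y‖ + δ) + ‖x‖ :=
    (norm_sub_le _ _).trans (by gcongr; exact (T.le_opNorm z).trans (by gcongr))
  exact pow_le_pow_left₀ (norm_nonneg _) hTz 2

theorem statement9_general
    {X : Type*} [NormedAddCommGroup X] [InnerProductSpace ℝ X] [CompleteSpace X]
    {Y : Type*} [NormedAddCommGroup Y] [InnerProductSpace ℝ Y] [CompleteSpace Y]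
    (L : X →L[ℝ] Y) (y : Y) (xdag : X)
    (hsol : L xdag = y)
    (r : ℝ → ℝ → ℝ) (ρ ρt : ℝ) (hρt1 : ρt < 1)
    (hrcont : ∀ α > (0:ℝ), ContinuousOn (r α) (Set.Ici 0))
    (hrnonneg : ∀ α > (0:ℝ), ∀ t ∈ Set.Ici (0:ℝ), 0 ≤ r α t)
    (hrbound : ∀ α > (0:ℝ), ∀ t > (0:ℝ), r α t ≤ min (1 / t) (ρ / Real.sqrt (α * t)))
    (hrt_anti : ∀ α > (0:ℝ), AntitoneOn (fun t => (1 - t * r α t) ^ 2) (Set.Ici 0))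
    (hrt_mono : ∀ t ∈ Set.Ici (0:ℝ), MonotoneOn (fun α => (1 - t * r α t) ^ 2) (Set.Ioi 0))
    (hrt_lt : ∀ α > (0:ℝ), (1 - α * r α α) ^ 2 < ρt)
    (xr : ℝ → Y → X) (Rs : ℝ → X →L[ℝ] X)
    (hxr : ∀ α > (0:ℝ), ∀ z : Y, xr α z = Rs α ((ContinuousLinearMap.adjoint L) z))
    (e : StieltjesFunction ℝ)
    (hint : ∀ α > (0:ℝ),
      ‖xr α y - xdag‖ ^ 2 = ∫ t in Set.Ioc (0:ℝ) (‖L‖ ^ 2), (1 - t * r α t) ^ 2 ∂e.measure)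
    (ΦY : (ℝ → ℝ) → (Y →L[ℝ] Y))
    (hΦadd : ∀ f g : ℝ → ℝ, ΦY (fun t => f t + g t) = ΦY f + ΦY g)
    (hΦmul : ∀ f g : ℝ → ℝ, ΦY (fun t => f t * g t) = (ΦY f).comp (ΦY g))
    (hΦone : ΦY (fun _ => (1:ℝ)) = ContinuousLinearMap.id ℝ Y)
    (hΦid : ΦY (fun t => t) = L.comp (ContinuousLinearMap.adjoint L))
    (hΦsa : ∀ f : ℝ → ℝ, ∀ u v : Y, ⟪ΦY f u, v⟫ = ⟪u, ΦY f v⟫)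
    (hΦnorm : ∀ f : ℝ → ℝ, ∀ c : ℝ, (∀ t ∈ Set.Icc (0:ℝ) (‖L‖ ^ 2), |f t| ≤ c) →
      ∀ u : Y, ‖ΦY f u‖ ≤ c * ‖u‖)
    (hΦspec : ∀ a b t : ℝ, a ≤ t → t ≤ b →
      t ∈ spectrum ℝ (L.comp (ContinuousLinearMap.adjoint L)) →
      ΦY (Set.indicator (Set.Icc a b) (fun _ => (1:ℝ))) ≠ 0)
    (hRssa : ∀ α > (0:ℝ), ∀ u v : X, ⟪Rs α u, v⟫ = ⟪u, Rs α v⟫)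
    (hcomm : ∀ α > (0:ℝ), L.comp (Rs α) = (ΦY (r α)).comp L)
    (αδ : ℝ → ℝ)
    (hαδ : ∀ δ > (0:ℝ), 0 < αδ δ ∧ αδ δ * ‖xr (αδ δ) y - xdag‖ ^ 2 = δ ^ 2) :
    ∀ δ > (0:ℝ), αδ δ ∈ spectrum ℝ (L.comp (ContinuousLinearMap.adjoint L)) →
      (1 - Real.sqrt ρt) ^ 2 / 2 * (δ ^ 2 / αδ δ) ≤ (⨆ yt : {z : Y // ‖z - y‖ ≤ δ}, ⨅ a : {a : ℝ // 0 < a}, ‖xr a.1 yt.1 - xdag‖ ^ 2) := by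
  have hbias_mono : MonotoneOn (fun a => ‖xr a y - xdag‖ ^ 2) (Set.Ioi 0) := by
    refine (monotoneOn_setIntegral_Ioc (fun a ha => ?_) fun t ht => hrt_mono t ht.1.le).congr
      fun a ha => (hint a ha).symm
    exact (continuousOn_const.sub (continuousOn_id.mul
      ((hrcont a ha).mono Set.Icc_subset_Ici_self))).pow 2
  intro δ hδ hspec
  obtain ⟨hα, hbias_α⟩ := hαδ δ hδ
  set α := αδ δ
  obtain ⟨w, hw, hPw, hyw⟩ := exists_norm_eq_one_fixed_inner_nonpos
    (funCalc_indicator_comp_self hΦmul _) (hΦspec α α α le_rfl le_rfl hspec) y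
  have hΦw : ∀ f, ΦY f w = f α • w := funCalc_apply_of_indicator_fixed hΦadd hΦmul hΦone hΦnorm hPw
  have hLw : L (ContinuousLinearMap.adjoint L w) = α • w := by simpa [hΦid] using hΦw fun t => t
  have hbdd : BddAbove (Set.range fun z : {z : Y // ‖z - y‖ ≤ δ} =>
      ⨅ a : {a : ℝ // 0 < a}, ‖xr a z - xdag‖ ^ 2) :=
    bddAbove_range_ciInf_of_nonneg (fun _ _ => sq_nonneg _) ⟨1, one_pos⟩
      (by simpa only [ContinuousLinearMap.comp_apply, ← hxr 1 one_pos] using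
        bddAbove_range_norm_sq_sub ((Rs 1).comp (ContinuousLinearMap.adjoint L)) xdag y δ)
  refine le_ciSup_of_le hbdd ⟨y + δ • w, by simp [norm_smul, hw, abs_of_pos hδ]⟩
    (le_ciInf fun ⟨a, ha⟩ => ?_)
  have hs0 : 0 ≤ r a α := hrnonneg a ha α hα.le
  have hs1 : α * r a α ≤ 1 :=
    (le_div_iff₀' hα).mp ((hrbound a ha α hα).trans (min_le_left _ _))
  have hcases : δ ^ 2 / α ≤ ‖xr a y - xdag‖ ^ 2 ∨ (1 - √ρt) ^ 2 / α ≤ α * r a α ^ 2 := by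
    rcases le_total a α with h | h
    · exact .inr <| one_sub_sqrt_sq_div_le_mul_sq hα hρt1.le hs1
        ((hrt_anti a ha ha.le hα.le h).trans (hrt_lt a ha).le)
    · refine .inl ((div_le_iff₀ hα).mpr ?_)
      rw [← hbias_α]
      nlinarith [hbias_mono hα ha h]
  have hc : (1 - √ρt) ^ 2 ≤ 1 := by
    nlinarith [Real.sqrt_nonneg ρt, Real.sqrt_le_one.mpr hρt1.le]
  subst hsol
  simp only [hxr a ha] at hcases ⊢
  rw [norm_sq_perturbed_error (hRssa a ha) (hΦsa (r a)) (hcomm a ha) (hΦw (r a)) hLw, hw, one_pow,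
    mul_one]
  exact half_mul_div_le_of_bias_or_noise hα hδ.le (by positivity) (by positivity)
    (mul_nonneg_of_nonpos_of_nonpos (by nlinarith) hyw) hc hcases

theorem statement9
    {X : Type*} [NormedAddCommGroup X] [InnerProductSpace ℝ X] [CompleteSpace X]
    {Y : Type*} [NormedAddCommGroup Y] [InnerProductSpace ℝ Y] [CompleteSpace Y]
    (L : X →L[ℝ] Y) (y : Y) (xdag : X)
    (hsol : L xdag = y) (hmin : ∀ x : X, L x = y → ‖xdag‖ ≤ ‖x‖)
    (r : ℝ → ℝ → ℝ) (ρ ρt : ℝ) (hρ0 : 0 < ρ) (hρ1 : ρ < 1) (hρt0 : 0 < ρt) (hρt1 : ρt < 1)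
    (hrcont : ∀ α > (0:ℝ), ContinuousOn (r α) (Set.Ici 0))
    (hrnonneg : ∀ α > (0:ℝ), ∀ t ∈ Set.Ici (0:ℝ), 0 ≤ r α t)
    (hrbound : ∀ α > (0:ℝ), ∀ t > (0:ℝ), r α t ≤ min (1 / t) (ρ / Real.sqrt (α * t)))
    (hrt_anti : ∀ α > (0:ℝ), AntitoneOn (fun t => (1 - t * r α t) ^ 2) (Set.Ici 0))
    (hrt_cont : ∀ t ∈ Set.Ici (0:ℝ), ContinuousOn (fun α => (1 - t * r α t) ^ 2) (Set.Ioi 0))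
    (hrt_mono : ∀ t ∈ Set.Ici (0:ℝ), MonotoneOn (fun α => (1 - t * r α t) ^ 2) (Set.Ioi 0))
    (hrt_lt : ∀ α > (0:ℝ), (1 - α * r α α) ^ 2 < ρt)
    (xr : ℝ → Y → X) (Rs : ℝ → X →L[ℝ] X)
    (hxr : ∀ α > (0:ℝ), ∀ z : Y, xr α z = Rs α ((ContinuousLinearMap.adjoint L) z))
    (e : StieltjesFunction ℝ) (he0 : e 0 = 0)
    (he_const : ∀ t : ℝ, ‖L‖ ^ 2 ≤ t → e t = e (‖L‖ ^ 2))
    (hint : ∀ α > (0:ℝ),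
      ‖xr α y - xdag‖ ^ 2 = ∫ t in Set.Ioc (0:ℝ) (‖L‖ ^ 2), (1 - t * r α t) ^ 2 ∂e.measure)
    (ΦY : (ℝ → ℝ) → (Y →L[ℝ] Y))
    (hΦadd : ∀ f g : ℝ → ℝ, ΦY (fun t => f t + g t) = ΦY f + ΦY g)
    (hΦmul : ∀ f g : ℝ → ℝ, ΦY (fun t => f t * g t) = (ΦY f).comp (ΦY g))
    (hΦone : ΦY (fun _ => (1:ℝ)) = ContinuousLinearMap.id ℝ Y)
    (hΦid : ΦY (fun t => t) = L.comp (ContinuousLinearMap.adjoint L))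
    (hΦsa : ∀ f : ℝ → ℝ, ∀ u v : Y, ⟪ΦY f u, v⟫ = ⟪u, ΦY f v⟫)
    (hΦpos : ∀ f : ℝ → ℝ, (∀ t ∈ Set.Icc (0:ℝ) (‖L‖ ^ 2), 0 ≤ f t) → ∀ u : Y, 0 ≤ ⟪ΦY f u, u⟫)
    (hΦnorm : ∀ f : ℝ → ℝ, ∀ c : ℝ, (∀ t ∈ Set.Icc (0:ℝ) (‖L‖ ^ 2), |f t| ≤ c) →
      ∀ u : Y, ‖ΦY f u‖ ≤ c * ‖u‖)
    (hΦspec : ∀ a b t : ℝ, a ≤ t → t ≤ b →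
      t ∈ spectrum ℝ (L.comp (ContinuousLinearMap.adjoint L)) →
      ΦY (Set.indicator (Set.Icc a b) (fun _ => (1:ℝ))) ≠ 0)
    (hRssa : ∀ α > (0:ℝ), ∀ u v : X, ⟪Rs α u, v⟫ = ⟪u, Rs α v⟫)
    (hcomm : ∀ α > (0:ℝ), L.comp (Rs α) = (ΦY (r α)).comp L)
    (hpos : ∀ α > (0:ℝ), 0 < ‖xr α y - xdag‖)
    (αδ : ℝ → ℝ)
    (hαδ : ∀ δ > (0:ℝ), 0 < αδ δ ∧ αδ δ * ‖xr (αδ δ) y - xdag‖ ^ 2 = δ ^ 2) :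
    ∀ δ > (0:ℝ), αδ δ ∈ spectrum ℝ (L.comp (ContinuousLinearMap.adjoint L)) →
      (1 - Real.sqrt ρt) ^ 2 / 2 * (δ ^ 2 / αδ δ) ≤ (⨆ yt : {z : Y // ‖z - y‖ ≤ δ}, ⨅ a : {a : ℝ // 0 < a}, ‖xr a.1 yt.1 - xdag‖ ^ 2) :=
  statement9_general L y xdag hsol r ρ ρt hρt1 hrcont hrnonneg hrbound hrt_anti hrt_mono hrt_lt xr
    Rs hxr e hint ΦY hΦadd hΦmul hΦone hΦid hΦsa hΦnorm hΦspec hRssa hcomm αδ hαδ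
end

section
/- Let φ : [0,∞) → [0,∞) be an increasing function satisfying φ(γα) ≤ g(γ)·φ(α) for all α, γ > 0, where g : (0,∞) → (0,∞) is increasing and satisfies g(γ) ≤ (C/4)·(1+γ²) for all γ > 0 for some constant C > 0. Then the Tikhonov error function ṙ_α(λ) = α²/(α+λ)² satisfies: (a) ṙ_α(λ)/ṙ_β(λ) ≤ C·φ(α)/φ(β) for all 0 < α ≤ β ≤ λ, and (b) ṙ_α(λ)/ṙ_β(λ) ≥ (1/4)·φ(α)/φ(β) for all 0 < λ ≤ α ≤ β. -/
open MeasureTheory RealInnerProductSpace Filter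

theorem statement12
    (φ g : ℝ → ℝ) (C : ℝ) (hC : 0 < C)
    (hφmono : MonotoneOn φ (Set.Ici 0)) (hφpos : ∀ t > (0:ℝ), 0 < φ t)
    (hgmono : MonotoneOn g (Set.Ioi 0)) (hgpos : ∀ γ > (0:ℝ), 0 < g γ)
    (hsub : ∀ γ > (0:ℝ), ∀ α > (0:ℝ), φ (γ * α) ≤ g γ * φ α)
    (hgC : ∀ γ > (0:ℝ), g γ ≤ C / 4 * (1 + γ ^ 2)) :
    (∀ α β t : ℝ, 0 < α → α ≤ β → β ≤ t →
      (α ^ 2 / (α + t) ^ 2) / (β ^ 2 / (β + t) ^ 2) ≤ C * (φ α / φ β))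
    ∧ (∀ α β t : ℝ, 0 < t → t ≤ α → α ≤ β →
      1 / 4 * (φ α / φ β) ≤ (α ^ 2 / (α + t) ^ 2) / (β ^ 2 / (β + t) ^ 2)) := by
  constructor
  · intro α β t hα hαβ hβt
    have hβ : 0 < β := lt_of_lt_of_le hα hαβ
    have ht : 0 < t := lt_of_lt_of_le hβ hβt
    have hβt' : 0 < β + t := by linarith
    have hαt' : 0 < α + t := by linarith
    have hφα : 0 < φ α := hφpos α hα
    have hφβ : 0 < φ β := hφpos β hβ
    have hγ : 0 < β / α := div_pos hβ hα
    have hγα : β / α * α = β := div_mul_cancel₀ β (ne_of_gt hα)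
    have h1 : φ β ≤ g (β / α) * φ α := by
      have := hsub (β / α) hγ α hα
      rwa [hγα] at this
    have h2 : g (β / α) ≤ C / 4 * (1 + (β / α) ^ 2) := hgC (β / α) hγ
    have h3 : φ β ≤ C / 4 * (1 + (β / α) ^ 2) * φ α := by
      calc φ β ≤ g (β / α) * φ α := h1
        _ ≤ C / 4 * (1 + (β / α) ^ 2) * φ α :=
          mul_le_mul_of_nonneg_right h2 hφα.le
    have h4 : 4 * α ^ 2 * φ β ≤ C * (α ^ 2 + β ^ 2) * φ α := by
      have hdiv : (β / α) ^ 2 = β ^ 2 / α ^ 2 := div_pow β α 2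
      have := mul_le_mul_of_nonneg_left h3 (by positivity : (0:ℝ) ≤ 4 * α ^ 2)
      calc 4 * α ^ 2 * φ β ≤ 4 * α ^ 2 * (C / 4 * (1 + (β / α) ^ 2) * φ α) := this
        _ = C * (α ^ 2 + β ^ 2) * φ α := by
            rw [hdiv]; field_simp
    have key : (β + t) ^ 2 * (α ^ 2 + β ^ 2) ≤ 4 * β ^ 2 * (α + t) ^ 2 := by
      have hs : 0 ≤ t - β := sub_nonneg.2 hβt
      have hd : 0 ≤ β - α := sub_nonneg.2 hαβ
      nlinarith [mul_nonneg hs (mul_nonneg hβ.le (mul_nonneg hd (by linarith : (0:ℝ) ≤ β + α))),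
        mul_nonneg hs (mul_nonneg hα.le (sq_nonneg β)),
        mul_nonneg (mul_nonneg hs hs) (sq_nonneg β),
        mul_nonneg (mul_nonneg hs hs) (mul_nonneg hd (by linarith : (0:ℝ) ≤ β + α)),
        mul_nonneg hα.le (mul_nonneg hβ.le (sq_nonneg β))]
    have heq : (α ^ 2 / (α + t) ^ 2) / (β ^ 2 / (β + t) ^ 2)
        = α ^ 2 * (β + t) ^ 2 / ((α + t) ^ 2 * β ^ 2) := by
      field_simp
    rw [heq, ← mul_div_assoc, div_le_div_iff₀ (by positivity) hφβ]
    -- α^2*(β+t)^2 * φ β ≤ C * φ α * ((α+t)^2 * β^2)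
    nlinarith [mul_le_mul_of_nonneg_left h4 (sq_nonneg (β + t)),
      mul_le_mul_of_nonneg_right key (mul_nonneg hC.le hφα.le)]
  · intro α β t ht htα hαβ
    have hα : 0 < α := lt_of_lt_of_le ht htα
    have hβ : 0 < β := lt_of_lt_of_le hα hαβ
    have hφα : 0 < φ α := hφpos α hα
    have hφβ : 0 < φ β := hφpos β hβ
    have hratio : φ α / φ β ≤ 1 := by
      rw [div_le_one hφβ]
      exact hφmono (le_of_lt hα) (le_of_lt hβ) hαβ
    have heq : (α ^ 2 / (α + t) ^ 2) / (β ^ 2 / (β + t) ^ 2)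
        = α ^ 2 * (β + t) ^ 2 / ((α + t) ^ 2 * β ^ 2) := by
      have h1 : (0:ℝ) < α + t := by linarith
      have h2 : (0:ℝ) < β + t := by linarith
      field_simp
    rw [heq]
    have hq : (1:ℝ) / 4 ≤ α ^ 2 * (β + t) ^ 2 / ((α + t) ^ 2 * β ^ 2) := by
      rw [div_le_div_iff₀ (by norm_num) (by positivity)]
      have h5 : (α + t) ^ 2 ≤ (2 * α) ^ 2 := by nlinarith
      have h6 : β ^ 2 ≤ (β + t) ^ 2 := by nlinarith
      nlinarith [mul_le_mul h5 h6 (sq_nonneg β) (by positivity : (0:ℝ) ≤ (2 * α) ^ 2)]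
    calc 1 / 4 * (φ α / φ β) ≤ 1 / 4 * 1 := by
          have := mul_le_mul_of_nonneg_left hratio (by norm_num : (0:ℝ) ≤ 1/4)
          linarith
      _ ≤ α ^ 2 * (β + t) ^ 2 / ((α + t) ^ 2 * β ^ 2) := by linarith
end

section
/- Let φ : [0,∞) → [0,∞) be an increasing, continuous function and ν ∈ (0,1). If there exists a constant C > 0 such that e(λ) ≤ C·φ(λ)^{2ν} for all λ > 0, then there exists a constant C̃ > 0 (explicitly C̃ = 2·C^{(1−ν)/2}·c^ν with c² = C·(1 + 1/(1−ν))) such that ⟨x†, x⟩ ≤ C̃·‖φ(L*L)x‖^ν·‖x‖^{1−ν} for all x ∈ X. (Converse implication of Proposition 4.1.) -/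
/-!
Split `x† = E_t x† + (x† - E_t x†)` at a level `t` with `φ t = a`. The source condition bounds
the first part by `√C a^ν ‖x‖`. For the second part, cut `[t, ‖L‖²]` at the points where `φ`
takes the values `a q^i`: on the `i`-th spectral slice `Δ`, `‖Δ x‖ ≤ ‖Δ φ(L*L) x‖ / (a q^i)`,
so by Cauchy–Schwarz this part is at most `(∑ Δe_i / (a q^i)²)^{1/2} ‖φ(L*L) x‖`. Summation
by parts against `e ≤ C φ^{2ν}` bounds the sum by `C G(q) a^{2ν-2}`, where `G(q) → 1 + 1/(1-ν)`
as `q → 1`. Balancing the two terms in `a` gives the constant of the theorem.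
-/

open MeasureTheory RealInnerProductSpace Filter

open Finset Topology

theorem sum_range_sub_mul_le {e B w : ℕ → ℝ} {m : ℕ} (he0 : 0 ≤ e 0 * w 0)
    (he : ∀ i ≤ m, e i ≤ B i) (hwm : 0 ≤ w m) (hw : ∀ i < m, w (i + 1) ≤ w i) :
    ∑ i ∈ range m, (e (i + 1) - e i) * w i ≤
      B m * w m + ∑ i ∈ range m, B (i + 1) * (w i - w (i + 1)) := by
  have summation_by_parts : ∀ n, ∑ i ∈ range n, (e (i + 1) - e i) * w i =
      e n * w n - e 0 * w 0 + ∑ i ∈ range n, e (i + 1) * (w i - w (i + 1)) := by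
    intro n
    induction n with
    | zero => simp
    | succ n ih => rw [sum_range_succ, ih, sum_range_succ]; ring
  have hlast : e m * w m ≤ B m * w m := mul_le_mul_of_nonneg_right (he m le_rfl) hwm
  have hsum : ∑ i ∈ range m, e (i + 1) * (w i - w (i + 1)) ≤
      ∑ i ∈ range m, B (i + 1) * (w i - w (i + 1)) := by
    refine sum_le_sum fun i hi => ?_
    rw [mem_range] at hi
    exact mul_le_mul_of_nonneg_right (he (i + 1) hi) (sub_nonneg.2 (hw i hi))
  rw [summation_by_parts]
  linarith

/-- `C b^{2ν-2} · geomSumConst ν q` bounds the boundary term `C b^{2ν-2}` plus the upper sum,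
over the levels `b q^i`, of `∫_b^∞ C s^{2ν} d(-s⁻²) = C b^{2ν-2} / (1 - ν)`. -/
noncomputable def geomSumConst (ν q : ℝ) : ℝ :=
  1 + (q ^ 2 - 1) / (q ^ (2 - 2 * ν) - 1)

theorem sum_range_sub_div_sq_le {e : ℕ → ℝ} {m : ℕ} {b q C ν : ℝ} (hb : 0 < b) (hq : 1 < q)
    (hν : ν < 1) (hC : 0 ≤ C) (he0 : 0 ≤ e 0)
    (he : ∀ i ≤ m, e i ≤ C * (b * q ^ i) ^ (2 * ν)) :
    ∑ i ∈ range m, (e (i + 1) - e i) / (b * q ^ i) ^ 2 ≤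
      C * geomSumConst ν q * b ^ (2 * (ν - 1)) := by
  set r := q ^ (2 * (ν - 1)) with hr
  have hq0 : 0 < q := one_pos.trans hq
  have hx : ∀ i, 0 < b * q ^ i := fun i => by positivity
  have hr0 : 0 < r := Real.rpow_pos_of_pos hq0 _
  have hr1 : r < 1 := Real.rpow_lt_one_of_one_lt_of_neg hq (by linarith)
  have hpow : ∀ i, (b * q ^ i) ^ (2 * ν) * ((b * q ^ i) ^ 2)⁻¹ = b ^ (2 * (ν - 1)) * r ^ i := by
    intro i
    rw [← Real.rpow_two, ← Real.rpow_neg (hx i).le, ← Real.rpow_add (hx i),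
      Real.mul_rpow hb.le (by positivity), Real.rpow_pow_comm hq0.le]
    ring_nf
  have hterm : ∀ i, C * (b * q ^ (i + 1)) ^ (2 * ν) *
      (((b * q ^ i) ^ 2)⁻¹ - ((b * q ^ (i + 1)) ^ 2)⁻¹) =
        C * b ^ (2 * (ν - 1)) * ((q ^ 2 - 1) * r) * r ^ i := by
    intro i
    have hdiff : ((b * q ^ i) ^ 2)⁻¹ - ((b * q ^ (i + 1)) ^ 2)⁻¹ =
        (q ^ 2 - 1) * ((b * q ^ (i + 1)) ^ 2)⁻¹ := by
      field_simp
      ring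
    rw [hdiff, mul_left_comm, mul_assoc, hpow]
    ring
  have hG : geomSumConst ν q = 1 + (q ^ 2 - 1) * r * (1 - r)⁻¹ := by
    rw [geomSumConst, show 2 - 2 * ν = -(2 * (ν - 1)) by ring, Real.rpow_neg hq0.le, ← hr]
    field_simp
  have hgeom : ∑ i ∈ range m, r ^ i ≤ (1 - r)⁻¹ := by
    have h := geom_sum_Ico_le_of_lt_one (m := 0) (n := m) hr0.le hr1
    rwa [← range_eq_Ico, pow_zero, one_div] at h
  have hrm : r ^ m ≤ 1 := pow_le_one₀ hr0.le hr1.le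
  have hq2 : 0 ≤ (q ^ 2 - 1) * r := mul_nonneg (by nlinarith) hr0.le
  have hCb : 0 ≤ C * b ^ (2 * (ν - 1)) := by positivity
  have habel := sum_range_sub_mul_le (B := fun i => C * (b * q ^ i) ^ (2 * ν))
    (w := fun i => ((b * q ^ i) ^ 2)⁻¹) (mul_nonneg he0 (by positivity)) he (by positivity)
    (fun i _ => inv_anti₀ (by positivity) (by gcongr <;> first | exact hq.le | omega))
  simp only [div_eq_mul_inv]
  refine habel.trans ?_
  rw [mul_assoc, hpow, sum_congr rfl fun i _ => hterm i, ← mul_sum, hG]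
  calc C * (b ^ (2 * (ν - 1)) * r ^ m) +
        C * b ^ (2 * (ν - 1)) * ((q ^ 2 - 1) * r) * ∑ i ∈ range m, r ^ i
      = C * b ^ (2 * (ν - 1)) * (r ^ m + (q ^ 2 - 1) * r * ∑ i ∈ range m, r ^ i) := by ring
    _ ≤ C * b ^ (2 * (ν - 1)) * (1 + (q ^ 2 - 1) * r * (1 - r)⁻¹) := by gcongr
    _ = _ := by ring

theorem tendsto_div_sub_one_of_hasDerivAt {f : ℝ → ℝ} {f' : ℝ} (hf : HasDerivAt f f' 1)
    (hf1 : f 1 = 1) : Tendsto (fun q => (f q - 1) / (q - 1)) (𝓝[>] 1) (𝓝 f') :=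
  (hf.tendsto_slope.mono_left (nhdsWithin_mono _ fun _ hq => ne_of_gt hq)).congr
    fun q => by rw [slope_def_field, hf1]

theorem tendsto_geomSumConst {ν : ℝ} (hν : ν < 1) :
    Tendsto (geomSumConst ν) (𝓝[>] 1) (𝓝 (1 + 1 / (1 - ν))) := by
  have hnum := tendsto_div_sub_one_of_hasDerivAt (hasDerivAt_pow 2 1) (one_pow 2)
  have hden := tendsto_div_sub_one_of_hasDerivAt
    (Real.hasDerivAt_rpow_const (p := 2 - 2 * ν) (Or.inl one_ne_zero)) (Real.one_rpow _)
  have hquot := (hnum.div hden (by simp; linarith)).const_add 1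
  have hlim : (1 : ℝ) + (2 : ℕ) * 1 ^ (2 - 1) / ((2 - 2 * ν) * 1 ^ (2 - 2 * ν - 1)) =
      1 + 1 / (1 - ν) := by
    rw [one_pow, Real.one_rpow, mul_one, mul_one]
    field_simp
    ring
  rw [hlim] at hquot
  refine hquot.congr' (eventually_nhdsWithin_of_forall fun q hq => ?_)
  rw [Pi.div_apply, geomSumConst, div_div_div_cancel_right₀ (sub_ne_zero.2 (ne_of_gt hq))]

theorem mul_div_rpow_add_mul_div_rpow {X Y : ℝ} (hX : 0 < X) (hY : 0 < Y) (ν : ℝ) :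
    X * (Y / X) ^ ν + Y * (Y / X) ^ (ν - 1) = 2 * X ^ (1 - ν) * Y ^ ν := by
  rw [Real.rpow_sub (div_pos hY hX), Real.rpow_one, Real.div_rpow hY.le hX.le,
    Real.rpow_sub hX, Real.rpow_one]
  field_simp
  ring

theorem le_two_mul_rpow_of_forall_le {p s c ν A B : ℝ} (hs : 0 < s) (hc : 0 ≤ c)
    (hν0 : 0 ≤ ν) (hν1 : ν ≤ 1) (hA : 0 ≤ A) (hB : 0 ≤ B)
    (h : ∀ K > c, ∀ a > 0, p ≤ s * a ^ ν * A + K * a ^ (ν - 1) * B) :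
    p ≤ 2 * s ^ (1 - ν) * c ^ ν * B ^ ν * A ^ (1 - ν) := by
  -- balance the two terms at `a = K B / (s A)`, after shifting `K`, `A`, `B` by `δ > 0`
  have hperturbed : ∀ δ > 0,
      p ≤ 2 * s ^ (1 - ν) * (c + δ) ^ ν * (B + δ) ^ ν * (A + δ) ^ (1 - ν) := by
    intro δ hδ
    have hX : 0 < s * (A + δ) := by positivity
    have hY : 0 < (c + δ) * (B + δ) := by positivity
    set a := (c + δ) * (B + δ) / (s * (A + δ))
    have ha : 0 < a := div_pos hY hX
    calc p ≤ s * a ^ ν * A + (c + δ) * a ^ (ν - 1) * B := h _ (by linarith) a ha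
      _ ≤ s * a ^ ν * (A + δ) + (c + δ) * a ^ (ν - 1) * (B + δ) := by gcongr <;> linarith
      _ = s * (A + δ) * a ^ ν + (c + δ) * (B + δ) * a ^ (ν - 1) := by ring
      _ = 2 * (s * (A + δ)) ^ (1 - ν) * ((c + δ) * (B + δ)) ^ ν :=
        mul_div_rpow_add_mul_div_rpow hX hY ν
      _ = _ := by
        rw [Real.mul_rpow hs.le (by positivity), Real.mul_rpow (by positivity) (by positivity)]
        ring
  have hlim : Tendsto (fun δ => 2 * s ^ (1 - ν) * (c + δ) ^ ν * (B + δ) ^ ν * (A + δ) ^ (1 - ν))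
      (𝓝[>] 0) (𝓝 (2 * s ^ (1 - ν) * c ^ ν * B ^ ν * A ^ (1 - ν))) := by
    have hadd : ∀ z : ℝ, Tendsto (fun δ => z + δ) (𝓝[>] 0) (𝓝 z) := fun z => by
      simpa using ((continuous_const_add z).tendsto 0).mono_left nhdsWithin_le_nhds
    exact (((tendsto_const_nhds.mul ((hadd c).rpow_const (Or.inr hν0))).mul
      ((hadd B).rpow_const (Or.inr hν0))).mul ((hadd A).rpow_const (Or.inr (by linarith))))
  exact ge_of_tendsto hlim (eventually_nhdsWithin_of_forall hperturbed)

theorem exists_geom_partition {φ : ℝ → ℝ} (hφmono : MonotoneOn φ (Set.Ici 0))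
    (hφcont : ContinuousOn φ (Set.Ici 0)) {t₀ T q : ℝ} (ht₀ : 0 ≤ t₀) (hT : t₀ ≤ T)
    (hb : 0 < φ t₀) (hq : 1 < q) :
    ∃ (m : ℕ) (u : ℕ → ℝ), u 0 = t₀ ∧ u m = T ∧ (∀ i, u i ∈ Set.Icc t₀ T) ∧
      (∀ i < m, u i ≤ u (i + 1)) ∧ (∀ i < m, φ (u i) = φ t₀ * q ^ i) ∧
      φ T ≤ φ t₀ * q ^ m := by
  have hex : ∃ n : ℕ, φ T ≤ φ t₀ * q ^ (n + 1) := by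
    obtain ⟨n, hn⟩ := pow_unbounded_of_one_lt (φ T / φ t₀) hq
    refine ⟨n, ?_⟩
    rw [div_lt_iff₀ hb] at hn
    have := mul_le_mul_of_nonneg_left (pow_le_pow_right₀ hq.le (by omega : n ≤ n + 1)) hb.le
    linarith
  set n := Nat.find hex
  have hbelow : ∀ i, 1 ≤ i → i ≤ n → φ t₀ * q ^ i < φ T := fun i h1 hi => by
    obtain ⟨k, rfl⟩ := Nat.exists_eq_add_of_le' h1
    exact not_le.1 (Nat.find_min hex (by omega))
  have hIcc : Set.Icc t₀ T ⊆ Set.Ici 0 := fun s hs => le_trans ht₀ hs.1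
  have hivt : ∀ y ∈ Set.Icc (φ t₀) (φ T), ∃ s ∈ Set.Icc t₀ T, φ s = y :=
    fun y hy => intermediate_value_Icc hT (hφcont.mono hIcc) hy
  choose! pt hpt hφpt using hivt
  have hlevel : ∀ i, 1 ≤ i → i ≤ n → φ t₀ * q ^ i ∈ Set.Icc (φ t₀) (φ T) := fun i h1 hi =>
    ⟨le_mul_of_one_le_right hb.le (one_le_pow₀ hq.le), (hbelow i h1 hi).le⟩
  let u : ℕ → ℝ := fun i => if i = 0 then t₀ else if i ≤ n then pt (φ t₀ * q ^ i) else T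
  have hu : ∀ i, u i ∈ Set.Icc t₀ T := fun i => by
    by_cases h0 : i = 0
    · simp [u, h0, hT]
    by_cases hi : i ≤ n
    · simpa [u, h0, hi] using hpt _ (hlevel i (by omega) hi)
    · simp [u, h0, hi, hT]
  have hφu : ∀ i < n + 1, φ (u i) = φ t₀ * q ^ i := fun i hi => by
    by_cases h0 : i = 0
    · simp [u, h0]
    · simpa [u, h0, show i ≤ n by omega] using hφpt _ (hlevel i (by omega) (by omega))
  refine ⟨n + 1, u, by simp [u], by simp [u], hu, fun i hi => ?_, hφu, Nat.find_spec hex⟩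
  by_cases hin : i + 1 < n + 1
  · refine (hφmono.reflect_lt (hIcc (hu i)) (hIcc (hu (i + 1))) ?_).le
    rw [hφu i hi, hφu (i + 1) hin]
    exact mul_lt_mul_of_pos_left (pow_lt_pow_right₀ hq i.lt_succ_self) hb
  · simpa [u, show ¬ i + 1 ≤ n by omega] using (hu i).2

theorem sqrt_mul_rpow_two_mul (C : ℝ) {a : ℝ} (ha : 0 ≤ a) (p : ℝ) :
    √(C * a ^ (2 * p)) = √C * a ^ p := by
  rw [Real.sqrt_mul' _ (Real.rpow_nonneg ha _), mul_comm 2 p, Real.rpow_mul ha, Real.rpow_two,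
    Real.sqrt_sq (Real.rpow_nonneg ha _)]

/-- Models the spectral projections `E_{[0,t]}` of a self-adjoint operator. -/
structure IsNestedProjectionFamily {X : Type*} [NormedAddCommGroup X] [InnerProductSpace ℝ X]
    (E : ℝ → X →L[ℝ] X) : Prop where
  symm : ∀ t : ℝ, ∀ u v : X, ⟪E t u, v⟫ = ⟪u, E t v⟫
  comp : ∀ s t : ℝ, ∀ u : X, E s (E t u) = E (min s t) u

namespace IsNestedProjectionFamily

variable {X : Type*} [NormedAddCommGroup X] [InnerProductSpace ℝ X] {E : ℝ → X →L[ℝ] X}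

theorem inner_apply_self (hE : IsNestedProjectionFamily E) (t : ℝ) (v : X) :
    ⟪E t v, v⟫ = ‖E t v‖ ^ 2 := by
  rw [← real_inner_self_eq_norm_sq, ← hE.symm, hE.comp, min_self]

theorem inner_sub_apply (hE : IsNestedProjectionFamily E) {s t : ℝ} (hst : s ≤ t) (v w : X) :
    ⟪E t v - E s v, w⟫ = ⟪E t v - E s v, E t w - E s w⟫ := by
  have hproj : E t (E t w - E s w) - E s (E t w - E s w) = E t w - E s w := by
    simp only [map_sub, hE.comp, min_self, min_eq_left hst, min_eq_right hst]
    abel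
  have hsa : ∀ z : X, ⟪E t v - E s v, z⟫ = ⟪v, E t z - E s z⟫ := fun z => by
    rw [inner_sub_left, hE.symm, hE.symm, ← inner_sub_right]
  rw [hsa, hsa, hproj]

theorem norm_sub_apply_sq (hE : IsNestedProjectionFamily E) {s t : ℝ} (hst : s ≤ t) (v : X) :
    ‖E t v - E s v‖ ^ 2 = ‖E t v‖ ^ 2 - ‖E s v‖ ^ 2 := by
  rw [← real_inner_self_eq_norm_sq, ← hE.inner_sub_apply hst, inner_sub_left,
    hE.inner_apply_self, hE.inner_apply_self]

theorem inner_sub_le_of_partition (hE : IsNestedProjectionFamily E) {u w : ℕ → ℝ} {m : ℕ}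
    (hu : ∀ i < m, u i ≤ u (i + 1)) (hw : ∀ i < m, 0 < w i) {v x y : X}
    (hxy : ∀ i < m, w i * ‖E (u (i + 1)) x - E (u i) x‖ ≤ ‖E (u (i + 1)) y - E (u i) y‖) :
    ⟪E (u m) v - E (u 0) v, x⟫ ≤
      √(∑ i ∈ range m, (‖E (u (i + 1)) v‖ ^ 2 - ‖E (u i) v‖ ^ 2) / w i ^ 2) * ‖E (u m) y‖ := by
  have hterm : ∀ i ∈ range m, ⟪E (u (i + 1)) v - E (u i) v, x⟫ ≤
      ‖E (u (i + 1)) v - E (u i) v‖ / w i * ‖E (u (i + 1)) y - E (u i) y‖ := by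
    intro i hi
    rw [mem_range] at hi
    calc ⟪E (u (i + 1)) v - E (u i) v, x⟫
        = ⟪E (u (i + 1)) v - E (u i) v, E (u (i + 1)) x - E (u i) x⟫ :=
          hE.inner_sub_apply (hu i hi) v x
      _ ≤ ‖E (u (i + 1)) v - E (u i) v‖ * ‖E (u (i + 1)) x - E (u i) x‖ :=
          real_inner_le_norm _ _
      _ ≤ ‖E (u (i + 1)) v - E (u i) v‖ * (‖E (u (i + 1)) y - E (u i) y‖ / w i) := by
          gcongr
          rw [le_div_iff₀ (hw i hi), mul_comm]
          exact hxy i hi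
      _ = _ := by ring
  have hsq : ∀ z : X, ∀ i ∈ range m, ‖E (u (i + 1)) z - E (u i) z‖ ^ 2 =
      ‖E (u (i + 1)) z‖ ^ 2 - ‖E (u i) z‖ ^ 2 := fun z i hi =>
    hE.norm_sub_apply_sq (hu i (mem_range.1 hi)) z
  calc ⟪E (u m) v - E (u 0) v, x⟫ = ∑ i ∈ range m, ⟪E (u (i + 1)) v - E (u i) v, x⟫ := by
        rw [← sum_inner, sum_range_sub (fun i => E (u i) v)]
    _ ≤ ∑ i ∈ range m, ‖E (u (i + 1)) v - E (u i) v‖ / w i * ‖E (u (i + 1)) y - E (u i) y‖ :=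
        sum_le_sum hterm
    _ ≤ √(∑ i ∈ range m, (‖E (u (i + 1)) v - E (u i) v‖ / w i) ^ 2) *
          √(∑ i ∈ range m, ‖E (u (i + 1)) y - E (u i) y‖ ^ 2) :=
        Real.sum_mul_le_sqrt_mul_sqrt _ _ _
    _ = √(∑ i ∈ range m, (‖E (u (i + 1)) v‖ ^ 2 - ‖E (u i) v‖ ^ 2) / w i ^ 2) *
          √(‖E (u m) y‖ ^ 2 - ‖E (u 0) y‖ ^ 2) := by
        rw [sum_congr rfl (hsq y), sum_range_sub (fun i => ‖E (u i) y‖ ^ 2)]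
        congr 2
        exact sum_congr rfl fun i hi => by rw [div_pow, hsq v i hi]
    _ ≤ _ := by
        gcongr
        exact (Real.sqrt_le_sqrt (sub_le_self _ (sq_nonneg _))).trans_eq
          (Real.sqrt_sq (norm_nonneg _))

variable {φ : ℝ → ℝ} {A : X →L[ℝ] X} {T C ν : ℝ} {v : X}

theorem inner_sub_apply_le_of_decay (hE : IsNestedProjectionFamily E) (hET : ∀ u : X, E T u = u)
    (hφmono : MonotoneOn φ (Set.Ici 0)) (hφcont : ContinuousOn φ (Set.Ici 0))
    (hAcomm : ∀ t : ℝ, ∀ u : X, A (E t u) = E t (A u))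
    (hAlb : ∀ s t : ℝ, 0 ≤ s → s ≤ t → ∀ x : X, φ s * ‖E t x - E s x‖ ≤ ‖A (E t x - E s x)‖)
    (hC : 0 ≤ C) (hν0 : 0 ≤ ν) (hν1 : ν < 1)
    (hdecay : ∀ t ≥ (0 : ℝ), ‖E t v‖ ^ 2 ≤ C * φ t ^ (2 * ν)) {q t₀ : ℝ} (hq : 1 < q)
    (ht₀ : 0 ≤ t₀) (ht₀T : t₀ ≤ T) (hb : 0 < φ t₀) (x : X) :
    ⟪v - E t₀ v, x⟫ ≤ √(C * geomSumConst ν q) * φ t₀ ^ (ν - 1) * ‖A x‖ := by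
  obtain ⟨m, u, hu0, hum, huI, hu, hφu, hφT⟩ :=
    exists_geom_partition hφmono hφcont ht₀ ht₀T hb hq
  have hu_nonneg : ∀ i, 0 ≤ u i := fun i => ht₀.trans (huI i).1
  have hxy : ∀ i < m, φ t₀ * q ^ i * ‖E (u (i + 1)) x - E (u i) x‖ ≤
      ‖E (u (i + 1)) (A x) - E (u i) (A x)‖ := fun i hi => by
    simpa only [← hφu i hi, map_sub, hAcomm] using hAlb _ _ (hu_nonneg i) (hu i hi) x
  have he : ∀ i ≤ m, ‖E (u i) v‖ ^ 2 ≤ C * (φ t₀ * q ^ i) ^ (2 * ν) := fun i hi => by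
    have hφ_le : φ (u i) ≤ φ t₀ * q ^ i := by
      rcases hi.lt_or_eq with hi | rfl
      · exact (hφu i hi).le
      · rwa [hum]
    have hφ_nonneg : 0 ≤ φ (u i) :=
      hb.le.trans (hφmono (Set.mem_Ici.2 ht₀) (Set.mem_Ici.2 (hu_nonneg i)) (huI i).1)
    calc ‖E (u i) v‖ ^ 2 ≤ C * φ (u i) ^ (2 * ν) := hdecay _ (hu_nonneg i)
      _ ≤ C * (φ t₀ * q ^ i) ^ (2 * ν) := by gcongr
  have hsum := sum_range_sub_div_sq_le hb hq hν1 hC (sq_nonneg _) he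
  have hpartition := hE.inner_sub_le_of_partition hu
    (w := fun i => φ t₀ * q ^ i) (fun i _ => by positivity) hxy (v := v)
  rw [hum, hu0, hET, hET] at hpartition
  calc ⟪v - E t₀ v, x⟫ ≤ √(C * geomSumConst ν q * φ t₀ ^ (2 * (ν - 1))) * ‖A x‖ := by
        refine hpartition.trans ?_
        gcongr
    _ = _ := by rw [sqrt_mul_rpow_two_mul _ hb.le]

theorem inner_le_of_decay (hE : IsNestedProjectionFamily E) (hT : 0 ≤ T)
    (hET : ∀ u : X, E T u = u) (hE0 : E 0 v = 0)
    (hφmono : MonotoneOn φ (Set.Ici 0)) (hφcont : ContinuousOn φ (Set.Ici 0))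
    (hφnn : ∀ t ∈ Set.Ici (0 : ℝ), 0 ≤ φ t)
    (hAcomm : ∀ t : ℝ, ∀ u : X, A (E t u) = E t (A u))
    (hAlb : ∀ s t : ℝ, 0 ≤ s → s ≤ t → ∀ x : X, φ s * ‖E t x - E s x‖ ≤ ‖A (E t x - E s x)‖)
    (hC : 0 ≤ C) (hν0 : 0 ≤ ν) (hν1 : ν < 1)
    (hdecay : ∀ t ≥ (0 : ℝ), ‖E t v‖ ^ 2 ≤ C * φ t ^ (2 * ν))
    {q a : ℝ} (hq : 1 < q) (ha : 0 < a) (x : X) :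
    ⟪v, x⟫ ≤ √C * a ^ ν * ‖x‖ + √(C * geomSumConst ν q) * a ^ (ν - 1) * ‖A x‖ := by
  have hhead : ∀ t ≥ (0 : ℝ), φ t ≤ a → ⟪E t v, x⟫ ≤ √C * a ^ ν * ‖x‖ := fun t ht hφa => by
    have hnorm : ‖E t v‖ ≤ √C * a ^ ν := by
      rw [← sqrt_mul_rpow_two_mul _ ha.le]
      refine Real.le_sqrt_of_sq_le ((hdecay t ht).trans ?_)
      have hφt := hφnn t ht
      gcongr
    exact (real_inner_le_norm _ _).trans (by gcongr)
  have htail : ∀ t₀ ∈ Set.Icc 0 T, a ≤ φ t₀ →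
      ⟪v - E t₀ v, x⟫ ≤ √(C * geomSumConst ν q) * a ^ (ν - 1) * ‖A x‖ := fun t₀ ht₀ haφ => by
    refine (hE.inner_sub_apply_le_of_decay hET hφmono hφcont hAcomm hAlb hC hν0 hν1 hdecay hq
      ht₀.1 ht₀.2 (ha.trans_le haφ) x).trans ?_
    gcongr _ * ?_ * _
    exact Real.rpow_le_rpow_of_nonpos ha haφ (by linarith)
  have hsplit : ∀ t, ⟪v, x⟫ = ⟪E t v, x⟫ + ⟪v - E t v, x⟫ := fun t => by
    rw [inner_sub_left]; ring
  have hhead_nonneg : 0 ≤ √C * a ^ ν * ‖x‖ := by positivity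
  have htail_nonneg : 0 ≤ √(C * geomSumConst ν q) * a ^ (ν - 1) * ‖A x‖ := by positivity
  rcases le_or_gt (φ T) a with hTa | haT
  · rw [← hET v]
    linarith [hhead T hT hTa]
  rcases le_or_gt a (φ 0) with ha0 | h0a
  · have h := htail 0 ⟨le_rfl, hT⟩ ha0
    rw [hE0, sub_zero] at h
    linarith
  obtain ⟨t₀, ht₀, hφt₀⟩ :=
    intermediate_value_Icc hT (hφcont.mono Set.Icc_subset_Ici_self) ⟨h0a.le, haT.le⟩
  rw [hsplit t₀]
  exact add_le_add (hhead t₀ ht₀.1 hφt₀.le) (htail t₀ ht₀ hφt₀.ge)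

end IsNestedProjectionFamily

theorem statement14_general
    {X : Type*} [NormedAddCommGroup X] [InnerProductSpace ℝ X]
    {Y : Type*} [NormedAddCommGroup Y] [InnerProductSpace ℝ Y]
    (L : X →L[ℝ] Y) (xdag : X)
    (E : ℝ → X →L[ℝ] X)
    (hEsa : ∀ t : ℝ, ∀ u v : X, ⟪E t u, v⟫ = ⟪u, E t v⟫)
    (hEcomp : ∀ s t : ℝ, ∀ u : X, E s (E t u) = E (min s t) u)
    (hEtop : ∀ t : ℝ, ‖L‖ ^ 2 ≤ t → ∀ u : X, E t u = u)
    (hE0dag : E 0 xdag = 0)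
    (φ : ℝ → ℝ) (hφmono : MonotoneOn φ (Set.Ici 0))
    (hφcont : ContinuousOn φ (Set.Ici 0)) (hφnn : ∀ t ∈ Set.Ici (0:ℝ), 0 ≤ φ t)
    (Aφ : X →L[ℝ] X)
    (hAcomm : ∀ t : ℝ, ∀ u : X, Aφ (E t u) = E t (Aφ u))
    (hAlb : ∀ s t : ℝ, 0 ≤ s → s ≤ t → ∀ x : X,
      φ s * ‖E t x - E s x‖ ≤ ‖Aφ (E t x - E s x)‖)
    (ν : ℝ) (hν : ν ∈ Set.Ioo (0:ℝ) 1)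
    (C : ℝ) (hC : 0 < C)
    (hdecay : ∀ t > (0:ℝ), ‖E t xdag‖ ^ 2 ≤ C * φ t ^ (2 * ν)) :
    ∀ x : X, ⟪xdag, x⟫ ≤
      2 * C ^ ((1 - ν) / 2) * (C * (1 + 1 / (1 - ν))) ^ (ν / 2) * ‖Aφ x‖ ^ ν * ‖x‖ ^ (1 - ν) := by
  intro x
  obtain ⟨hν0, hν1⟩ := hν
  have hE : IsNestedProjectionFamily E := ⟨hEsa, hEcomp⟩
  have hdecay₀ : ∀ t ≥ (0 : ℝ), ‖E t xdag‖ ^ 2 ≤ C * φ t ^ (2 * ν) := fun t ht => by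
    rcases ht.eq_or_lt with rfl | ht
    · rw [hE0dag, norm_zero, sq, zero_mul]
      exact mul_nonneg hC.le (Real.rpow_nonneg (hφnn 0 Set.self_mem_Ici) _)
    · exact hdecay t ht
  have hlim : Tendsto (fun q => √(C * geomSumConst ν q)) (𝓝[>] 1)
      (𝓝 √(C * (1 + 1 / (1 - ν)))) := ((tendsto_geomSumConst hν1).const_mul C).sqrt
  have hγ : 0 ≤ C * (1 + 1 / (1 - ν)) := by
    have : 0 < 1 - ν := by linarith
    positivity
  rw [Real.rpow_div_two_eq_sqrt _ hC.le, Real.rpow_div_two_eq_sqrt _ hγ]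
  refine le_two_mul_rpow_of_forall_le (Real.sqrt_pos.2 hC) (Real.sqrt_nonneg _) hν0.le hν1.le
    (norm_nonneg x) (norm_nonneg (Aφ x)) fun K hK a ha => ?_
  obtain ⟨q, hqK, hq⟩ := ((hlim.eventually (gt_mem_nhds hK)).and self_mem_nhdsWithin).exists
  refine (hE.inner_le_of_decay (sq_nonneg ‖L‖) (hEtop _ le_rfl) hE0dag hφmono hφcont hφnn
    hAcomm hAlb hC.le hν0.le hν1 hdecay₀ hq ha x).trans ?_
  gcongr

theorem statement14
    {X : Type*} [NormedAddCommGroup X] [InnerProductSpace ℝ X] [CompleteSpace X]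
    {Y : Type*} [NormedAddCommGroup Y] [InnerProductSpace ℝ Y] [CompleteSpace Y]
    (L : X →L[ℝ] Y) (y : Y) (xdag : X)
    (hsol : L xdag = y) (hmin : ∀ x : X, L x = y → ‖xdag‖ ≤ ‖x‖)
    (E : ℝ → X →L[ℝ] X)
    (hEsa : ∀ t : ℝ, ∀ u v : X, ⟪E t u, v⟫ = ⟪u, E t v⟫)
    (hEcomp : ∀ s t : ℝ, ∀ u : X, E s (E t u) = E (min s t) u)
    (hEtop : ∀ t : ℝ, ‖L‖ ^ 2 ≤ t → ∀ u : X, E t u = u)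
    (hE0dag : E 0 xdag = 0)
    (hEr : ∀ u : X, ∀ t : ℝ, Tendsto (fun s => E s u) (nhdsWithin t (Set.Ioi t)) (nhds (E t u)))
    (φ : ℝ → ℝ) (hφmono : MonotoneOn φ (Set.Ici 0))
    (hφcont : ContinuousOn φ (Set.Ici 0)) (hφnn : ∀ t ∈ Set.Ici (0:ℝ), 0 ≤ φ t)
    (Aφ : X →L[ℝ] X)
    (hAcomm : ∀ t : ℝ, ∀ u : X, Aφ (E t u) = E t (Aφ u))
    (hAub : ∀ s t : ℝ, 0 ≤ s → s ≤ t → ∀ x : X,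
      ‖Aφ (E t x - E s x)‖ ≤ φ t * ‖E t x - E s x‖)
    (hAlb : ∀ s t : ℝ, 0 ≤ s → s ≤ t → ∀ x : X,
      φ s * ‖E t x - E s x‖ ≤ ‖Aφ (E t x - E s x)‖)
    (ν : ℝ) (hν : ν ∈ Set.Ioo (0:ℝ) 1)
    (C : ℝ) (hC : 0 < C)
    (hdecay : ∀ t > (0:ℝ), ‖E t xdag‖ ^ 2 ≤ C * φ t ^ (2 * ν)) :
    ∀ x : X, ⟪xdag, x⟫ ≤
      2 * C ^ ((1 - ν) / 2) * (C * (1 + 1 / (1 - ν))) ^ (ν / 2) * ‖Aφ x‖ ^ ν * ‖x‖ ^ (1 - ν) :=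
  statement14_general L xdag E hEsa hEcomp hEtop hE0dag φ hφmono hφcont hφnn Aφ hAcomm hAlb ν hν C
    hC hdecay
end

section
/- Let φ : [0,∞) → [0,∞) be an increasing, continuous function and ν ∈ (0,1]. Suppose the variational inequality ⟨x†, x⟩ ≤ C·‖φ(L*L)x‖^ν·‖x‖^{1−ν} holds for all x ∈ X with some constant C > 0. Then for every continuous function ψ : [0,∞) → [0,∞) for which there exist constants c > 0 and μ ∈ (0,ν) with ψ(λ) ≥ c·φ(λ)^μ for all λ ≥ 0, the minimum-norm solution satisfies x† ∈ range(ψ(L*L)). (Second part of Corollary 4.2.) -/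
open MeasureTheory RealInnerProductSpace Filter

/-!
Cut `x†` dyadically along the spectrum. With `θₙ = φ(‖L‖²) 2⁻ⁿ`, pick decreasing points `τₙ`
with `φ ≥ θₙ` on `[τₙ, ∞)` and `φ(τₙ) = θₙ` (or `τₙ = 0`, where `E` kills `x†`). Testing the
variational inequality against `E_{τₙ} x†` gives `‖E_{τₙ} x†‖ ≤ C θₙ^ν`. On the spectral slice
between `τₙ₊₁` and `τₙ` we have `ψ ≥ c θₙ₊₁^μ`, so `ψ(L*L)` is a self-adjoint operator bounded
below there, hence onto the slice, and the slice of `x†` has a preimage of norm `≲ θₙ^(ν-μ)`.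
As `μ < ν` these norms are summable, and the preimages add up to a preimage of `x†`.
-/

namespace LinearMap.IsSymmetric

variable {𝕜 H : Type*} [RCLike 𝕜] [NormedAddCommGroup H] [InnerProductSpace 𝕜 H]
  [CompleteSpace H]

theorem surjective_of_le_norm {T : H →L[𝕜] H} (hT : (T : H →ₗ[𝕜] H).IsSymmetric) {c : ℝ}
    (hc : 0 < c) (hT_ge : ∀ u, c * ‖u‖ ≤ ‖T u‖) : Function.Surjective T := by
  have hanti : AntilipschitzWith ⟨c⁻¹, inv_nonneg.mpr hc.le⟩ T :=
    T.antilipschitz_of_bound fun u => by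
      show ‖u‖ ≤ c⁻¹ * ‖T u‖
      rw [inv_mul_eq_div, le_div_iff₀ hc, mul_comm]
      exact hT_ge u
  have hker : LinearMap.ker (T : H →ₗ[𝕜] H) = ⊥ :=
    LinearMap.ker_eq_bot_of_injective hanti.injective
  have hclosed : IsClosed (LinearMap.range (T : H →ₗ[𝕜] H) : Set H) :=
    hanti.isClosed_range T.uniformContinuous
  refine LinearMap.range_eq_top.mp ?_
  rw [← hclosed.submodule_topologicalClosure_eq, ← Submodule.orthogonal_orthogonal_eq_closure,
    hT.orthogonal_range, hker, Submodule.bot_orthogonal_eq_top]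

end LinearMap.IsSymmetric

section Hilbert

variable {𝕜 H : Type*} [RCLike 𝕜] [NormedAddCommGroup H] [InnerProductSpace 𝕜 H]
  [CompleteSpace H]

theorem exists_apply_eq_of_isIdempotentElem {A P : H →L[𝕜] H}
    (hA : (A : H →ₗ[𝕜] H).IsSymmetric) (hP : IsIdempotentElem P) (hAP : Commute A P) {c : ℝ}
    (hc : 0 < c) (hA_ge : ∀ u ∈ P.range, c * ‖u‖ ≤ ‖A u‖) {v : H}
    (hv : v ∈ P.range) : ∃ w, A w = v ∧ c * ‖w‖ ≤ ‖v‖ := by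
  set M := P.range
  have : CompleteSpace M :=
    (ContinuousLinearMap.IsIdempotentElem.isClosed_range hP).completeSpace_coe
  have hAM : ∀ u ∈ M, A u ∈ M := by
    rintro _ ⟨u, rfl⟩
    exact ⟨A u, (ContinuousLinearMap.ext_iff.mp hAP u).symm⟩
  have hAM_symm : ((A.restrict hAM : M →L[𝕜] M) : M →ₗ[𝕜] M).IsSymmetric := fun u w => hA u w
  obtain ⟨w, hw⟩ := hAM_symm.surjective_of_le_norm hc (fun u => hA_ge u u.2) ⟨v, hv⟩
  have hAw : A w = v := congrArg Subtype.val hw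
  exact ⟨w, hAw, hAw ▸ hA_ge w w.2⟩

theorem exists_apply_eq_sub_of_le (E : ℝ → H →L[𝕜] H)
    (hE : ∀ s t : ℝ, ∀ u, E s (E t u) = E (min s t) u) {A : H →L[𝕜] H}
    (hA : (A : H →ₗ[𝕜] H).IsSymmetric) (hAE : ∀ t u, A (E t u) = E t (A u)) {s t : ℝ}
    (hst : s ≤ t) {c : ℝ} (hc : 0 < c) (hA_ge : ∀ u, c * ‖E t u - E s u‖ ≤ ‖A (E t u - E s u)‖)
    (x : H) : ∃ w, A w = E t x - E s x ∧ c * ‖w‖ ≤ ‖E t x - E s x‖ := by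
  have hP : IsIdempotentElem (E t - E s) := by
    ext u
    simp only [mul_apply_eq_comp, sub_apply, map_sub, hE,
      min_self, min_eq_left hst, min_eq_right hst]
    abel
  have hAP : Commute A (E t - E s) := by
    ext u
    simp [hAE]
  refine exists_apply_eq_of_isIdempotentElem hA hP hAP hc ?_ ⟨x, rfl⟩
  rintro _ ⟨u, rfl⟩
  exact hA_ge u

end Hilbert

theorem ContinuousLinearMap.apply_tsum_eq_of_telescoping {𝕜 E F : Type*} [RCLike 𝕜]
    [NormedAddCommGroup E] [NormedSpace 𝕜 E] [CompleteSpace E] [NormedAddCommGroup F]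
    [NormedSpace 𝕜 F] (A : E →L[𝕜] F) {w : ℕ → E} (hw : Summable fun n => ‖w n‖) {x : ℕ → F}
    (hx : Tendsto x atTop (nhds 0)) (hAw : ∀ n, A (w n) = x n - x (n + 1)) :
    A (∑' n, w n) = x 0 := by
  have hsum : HasSum (fun n => A (w n)) (A (∑' n, w n)) := hw.of_norm.hasSum.mapL A
  have hpartial : Tendsto (fun n => ∑ i ∈ Finset.range n, A (w i)) atTop (nhds (x 0)) := by
    simp_rw [hAw, Finset.sum_range_sub']
    simpa using tendsto_const_nhds.sub hx
  exact tendsto_nhds_unique hsum.tendsto_sum_nat hpartial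

theorem Real.mul_pow_rpow {a q : ℝ} (ha : 0 ≤ a) (hq : 0 ≤ q) (p : ℝ) (n : ℕ) :
    (a * q ^ n) ^ p = a ^ p * (q ^ p) ^ n := by
  rw [Real.mul_rpow ha (pow_nonneg hq n), Real.rpow_pow_comm hq]

theorem Real.summable_mul_pow_rpow {a q p : ℝ} (ha : 0 ≤ a) (hq₀ : 0 < q) (hq₁ : q < 1)
    (hp : 0 < p) : Summable fun n : ℕ => (a * q ^ n) ^ p := by
  simp_rw [Real.mul_pow_rpow ha hq₀.le]
  exact (summable_geometric_of_lt_one (by positivity) (Real.rpow_lt_one hq₀.le hq₁ hp)).mul_left _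

theorem norm_le_of_inner_le_rpow {X : Type*} [NormedAddCommGroup X] [InnerProductSpace ℝ X]
    {P A : X →L[ℝ] X} (hP_symm : (P : X →ₗ[ℝ] X).IsSymmetric)
    (hP : IsIdempotentElem P) {x : X} {a C ν : ℝ} (ha : 0 ≤ a) (hC : 0 ≤ C) (hν : 0 ≤ ν)
    (hA : ‖A (P x)‖ ≤ a * ‖P x‖)
    (hvar : ∀ z : X, ⟪x, z⟫ ≤ C * ‖A z‖ ^ ν * ‖z‖ ^ (1 - ν)) : ‖P x‖ ≤ C * a ^ ν := by
  set z := P x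
  rcases (norm_nonneg z).eq_or_lt with hz | hz
  · rw [← hz]
    positivity
  have hAz : ‖A z‖ ^ ν ≤ a ^ ν * ‖z‖ ^ ν := by
    rw [← Real.mul_rpow ha hz.le]
    exact Real.rpow_le_rpow (norm_nonneg _) hA hν
  refine le_of_mul_le_mul_right ?_ hz
  calc ‖z‖ * ‖z‖ = ⟪P x, P x⟫ := (real_inner_self_eq_norm_mul_norm z).symm
    _ = ⟪x, P (P x)⟫ := hP_symm x (P x)
    _ = ⟪x, z⟫ := by rw [← mul_apply_eq_comp, hP.eq]
    _ ≤ C * ‖A z‖ ^ ν * ‖z‖ ^ (1 - ν) := hvar z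
    _ ≤ C * (a ^ ν * ‖z‖ ^ ν) * ‖z‖ ^ (1 - ν) := by gcongr
    _ = C * a ^ ν * ‖z‖ := by
        rw [mul_assoc, mul_assoc, ← Real.rpow_add hz, add_sub_cancel, Real.rpow_one, mul_assoc]

theorem ContinuousLinearMap.exists_apply_eq_of_geometric {𝕜 E F : Type*} [RCLike 𝕜]
    [NormedAddCommGroup E] [NormedSpace 𝕜 E] [CompleteSpace E] [NormedAddCommGroup F]
    [NormedSpace 𝕜 F] (A : E →L[𝕜] F) {x : ℕ → F} {a q C c μ ν : ℝ} (ha : 0 < a) (hq₀ : 0 < q)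
    (hq₁ : q < 1) (hC : 0 ≤ C) (hc : 0 < c) (hμν : μ < ν) (hν : 0 < ν)
    (hx : ∀ n, ‖x n‖ ≤ C * (a * q ^ n) ^ ν)
    (hA : ∀ n, ∃ w, A w = x n - x (n + 1) ∧ c * (a * q ^ (n + 1)) ^ μ * ‖w‖ ≤ ‖x n - x (n + 1)‖) :
    ∃ w, A w = x 0 := by
  choose w hAw hw using hA
  have hw_le : ∀ n, ‖w n‖ ≤ 2 * C / (c * q ^ μ) * (a * q ^ n) ^ (ν - μ) := by
    intro n
    set t := a * q ^ n
    have ht : 0 < t := by positivity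
    have hsucc : a * q ^ (n + 1) = q * t := by ring
    have hxn : ‖x n - x (n + 1)‖ ≤ 2 * C * t ^ ν :=
      calc ‖x n - x (n + 1)‖ ≤ C * t ^ ν + C * (q * t) ^ ν :=
            (norm_sub_le _ _).trans (add_le_add (hx n) (hsucc ▸ hx (n + 1)))
        _ ≤ C * t ^ ν + C * t ^ ν := by
            gcongr
            exact mul_le_of_le_one_left ht.le hq₁.le
        _ = 2 * C * t ^ ν := by ring
    have hwn := (hw n).trans hxn
    rw [hsucc, Real.mul_rpow hq₀.le ht.le] at hwn
    rw [div_mul_eq_mul_div, le_div_iff₀ (by positivity)]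
    refine le_of_mul_le_mul_right ?_ (Real.rpow_pos_of_pos ht μ)
    calc ‖w n‖ * (c * q ^ μ) * t ^ μ = c * (q ^ μ * t ^ μ) * ‖w n‖ := by ring
      _ ≤ 2 * C * t ^ ν := hwn
      _ = 2 * C * t ^ (ν - μ) * t ^ μ := by
          rw [mul_assoc (2 * C), ← Real.rpow_add ht, sub_add_cancel]
  have hw_sum : Summable fun n => ‖w n‖ :=
    .of_nonneg_of_le (fun n => norm_nonneg _) hw_le
      ((Real.summable_mul_pow_rpow ha.le hq₀ hq₁ (sub_pos.mpr hμν)).mul_left _)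
  have hx_lim : Tendsto x atTop (nhds 0) := by
    refine squeeze_zero_norm hx ?_
    simpa using ((Real.summable_mul_pow_rpow ha.le hq₀ hq₁ hν).tendsto_atTop_zero.const_mul C)
  exact ⟨_, A.apply_tsum_eq_of_telescoping hw_sum hx_lim hAw⟩

/-- For monotone `φ`, a level point `s` of `θ` splits `[0, ∞)` into `[0, s)`, where `φ ≤ θ`,
and `[s, ∞)`, where `θ ≤ φ`. -/
def IsLevelPoint (φ : ℝ → ℝ) (θ s : ℝ) : Prop :=
  0 ≤ s ∧ θ ≤ φ s ∧ (s = 0 ∨ φ s = θ)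

namespace IsLevelPoint

variable {φ : ℝ → ℝ} {θ s : ℝ}

theorem exists_of_le {T : ℝ} (hcont : ContinuousOn φ (Set.Icc 0 T)) (hT : 0 ≤ T)
    (hθ : θ ≤ φ T) : ∃ s, IsLevelPoint φ θ s := by
  by_cases hθ₀ : θ ≤ φ 0
  · exact ⟨0, le_rfl, hθ₀, Or.inl rfl⟩
  obtain ⟨s, hs, hφs⟩ := intermediate_value_Icc hT hcont ⟨(not_le.mp hθ₀).le, hθ⟩
  exact ⟨s, hs.1, hφs.ge, Or.inr hφs⟩

theorem le_apply (hmono : MonotoneOn φ (Set.Ici 0)) (hs : IsLevelPoint φ θ s) {u : ℝ}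
    (hu : s ≤ u) : θ ≤ φ u :=
  hs.2.1.trans (hmono hs.1 (hs.1.trans hu) hu)

theorem le_of_lt (hmono : MonotoneOn φ (Set.Ici 0)) (hs : IsLevelPoint φ θ s) {θ' s' : ℝ}
    (hs' : IsLevelPoint φ θ' s') (hθ : θ' < θ) : s' ≤ s := by
  rcases hs'.2.2 with rfl | hφs'
  · exact hs.1
  by_contra! hlt
  exact (hs.le_apply hmono hlt.le).not_gt (hφs' ▸ hθ)

theorem exists_antitone (hmono : MonotoneOn φ (Set.Ici 0)) (hcont : ContinuousOn φ (Set.Ici 0))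
    {T : ℝ} (hT : 0 ≤ T) {θ : ℕ → ℝ} (hθ : StrictAnti θ) (hθ₀ : θ 0 = φ T) :
    ∃ τ : ℕ → ℝ, τ 0 = T ∧ Antitone τ ∧ ∀ n, IsLevelPoint φ (θ n) (τ n) := by
  have hlevel (n : ℕ) : ∃ s, IsLevelPoint φ (θ n) s :=
    exists_of_le (hcont.mono Set.Icc_subset_Ici_self) hT (hθ₀ ▸ hθ.antitone n.zero_le)
  choose s hs using hlevel
  set τ : ℕ → ℝ := fun n => if n = 0 then T else s n
  have hτ : ∀ n, IsLevelPoint φ (θ n) (τ n) := by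
    rintro (_ | n)
    · exact ⟨hT, hθ₀.le, Or.inr hθ₀.symm⟩
    · exact hs (n + 1)
  exact ⟨τ, rfl, antitone_nat_of_succ_le fun n =>
    (hτ n).le_of_lt hmono (hτ (n + 1)) (hθ n.lt_succ_self), hτ⟩

end IsLevelPoint

theorem statement16_general
    {X : Type*} [NormedAddCommGroup X] [InnerProductSpace ℝ X] [CompleteSpace X]
    {Y : Type*} [NormedAddCommGroup Y] [InnerProductSpace ℝ Y]
    (L : X →L[ℝ] Y) (xdag : X)
    (E : ℝ → X →L[ℝ] X)
    (hEsa : ∀ t : ℝ, ∀ u v : X, ⟪E t u, v⟫ = ⟪u, E t v⟫)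
    (hEcomp : ∀ s t : ℝ, ∀ u : X, E s (E t u) = E (min s t) u)
    (hEtop : ∀ t : ℝ, ‖L‖ ^ 2 ≤ t → ∀ u : X, E t u = u)
    (hE0dag : E 0 xdag = 0)
    (φ ψ : ℝ → ℝ) (hφmono : MonotoneOn φ (Set.Ici 0))
    (hφcont : ContinuousOn φ (Set.Ici 0)) (hφnn : ∀ t ∈ Set.Ici (0:ℝ), 0 ≤ φ t)
    (Aφ Aψ : X →L[ℝ] X)
    (hAφub : ∀ t ∈ Set.Ici (0:ℝ), ∀ x : X, ‖Aφ (E t x)‖ ≤ φ t * ‖E t x‖)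
    (hAψsa : ∀ u v : X, ⟪Aψ u, v⟫ = ⟪u, Aψ v⟫)
    (hAψcomm : ∀ t : ℝ, ∀ u : X, Aψ (E t u) = E t (Aψ u))
    (hAψlb : ∀ s t : ℝ, 0 ≤ s → s ≤ t → ∀ c : ℝ, (∀ u ∈ Set.Icc s t, c ≤ ψ u) →
      ∀ x : X, c * ‖E t x - E s x‖ ≤ ‖Aψ (E t x - E s x)‖)
    (ν : ℝ) (hν0 : 0 < ν)
    (C : ℝ) (hC : 0 < C)
    (hvar : ∀ x : X, ⟪xdag, x⟫ ≤ C * ‖Aφ x‖ ^ ν * ‖x‖ ^ (1 - ν))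
    (c μ : ℝ) (hc : 0 < c) (hμ0 : 0 < μ) (hμν : μ < ν)
    (hψφ : ∀ t ∈ Set.Ici (0:ℝ), c * φ t ^ μ ≤ ψ t) :
    ∃ w : X, Aψ w = xdag := by
  set T := ‖L‖ ^ 2
  have hT : 0 ≤ T := sq_nonneg _
  have hET : E T xdag = xdag := hEtop T le_rfl xdag
  have hE_idem (t : ℝ) : IsIdempotentElem (E t) := by
    ext u
    simp [mul_apply_eq_comp, hEcomp]
  have hE_level {θ s : ℝ} (hθ : 0 ≤ θ) (hs : IsLevelPoint φ θ s) : ‖E s xdag‖ ≤ C * θ ^ ν := by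
    obtain ⟨hs₀, -, rfl | rfl⟩ := hs
    · rw [hE0dag, norm_zero]
      positivity
    · exact norm_le_of_inner_le_rpow (hEsa s) (hE_idem s) (hφnn s hs₀) hC.le hν0.le
        (hAφub s hs₀ xdag) hvar
  rcases (hφnn T hT).eq_or_lt with hφT | hφT
  · have hx := hE_level (hφnn T hT) ⟨hT, le_rfl, Or.inr rfl⟩
    rw [← hφT, Real.zero_rpow hν0.ne', mul_zero, hET, norm_le_zero_iff] at hx
    exact ⟨0, by rw [map_zero, hx]⟩
  have hθ : StrictAnti fun n : ℕ => φ T * 2⁻¹ ^ n := fun m n hmn =>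
    mul_lt_mul_of_pos_left (pow_lt_pow_right_of_lt_one₀ (by norm_num) (by norm_num) hmn) hφT
  obtain ⟨τ, hτ₀, hτ_anti, hτ⟩ := IsLevelPoint.exists_antitone hφmono hφcont hT hθ (by simp)
  have hslice (n : ℕ) : ∃ w, Aψ w = E (τ n) xdag - E (τ (n + 1)) xdag ∧
      c * (φ T * 2⁻¹ ^ (n + 1)) ^ μ * ‖w‖ ≤ ‖E (τ n) xdag - E (τ (n + 1)) xdag‖ := by
    have hψ_ge : ∀ u ∈ Set.Icc (τ (n + 1)) (τ n), c * (φ T * 2⁻¹ ^ (n + 1)) ^ μ ≤ ψ u :=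
      fun u hu => le_trans (by gcongr; exact (hτ (n + 1)).le_apply hφmono hu.1)
        (hψφ u ((hτ (n + 1)).1.trans hu.1))
    exact exists_apply_eq_sub_of_le E hEcomp hAψsa hAψcomm (hτ_anti n.le_succ) (by positivity)
      (hAψlb _ _ (hτ (n + 1)).1 (hτ_anti n.le_succ) _ hψ_ge) xdag
  rw [← hET, ← hτ₀]
  exact Aψ.exists_apply_eq_of_geometric hφT (by norm_num) (by norm_num) hC.le hc hμν hν0
    (fun n => hE_level (by positivity) (hτ n)) hslice

theorem statement16
    {X : Type*} [NormedAddCommGroup X] [InnerProductSpace ℝ X] [CompleteSpace X]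
    {Y : Type*} [NormedAddCommGroup Y] [InnerProductSpace ℝ Y] [CompleteSpace Y]
    (L : X →L[ℝ] Y) (y : Y) (xdag : X)
    (hsol : L xdag = y) (hmin : ∀ x : X, L x = y → ‖xdag‖ ≤ ‖x‖)
    (E : ℝ → X →L[ℝ] X)
    (hEsa : ∀ t : ℝ, ∀ u v : X, ⟪E t u, v⟫ = ⟪u, E t v⟫)
    (hEcomp : ∀ s t : ℝ, ∀ u : X, E s (E t u) = E (min s t) u)
    (hEtop : ∀ t : ℝ, ‖L‖ ^ 2 ≤ t → ∀ u : X, E t u = u)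
    (hE0dag : E 0 xdag = 0)
    (hEr : ∀ u : X, ∀ t : ℝ, Tendsto (fun s => E s u) (nhdsWithin t (Set.Ioi t)) (nhds (E t u)))
    (φ ψ : ℝ → ℝ) (hφmono : MonotoneOn φ (Set.Ici 0))
    (hφcont : ContinuousOn φ (Set.Ici 0)) (hφnn : ∀ t ∈ Set.Ici (0:ℝ), 0 ≤ φ t)
    (hψcont : ContinuousOn ψ (Set.Ici 0)) (hψnn : ∀ t ∈ Set.Ici (0:ℝ), 0 ≤ ψ t)
    (Aφ Aψ : X →L[ℝ] X)
    (hAφub : ∀ t ∈ Set.Ici (0:ℝ), ∀ x : X, ‖Aφ (E t x)‖ ≤ φ t * ‖E t x‖)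
    (hAψsa : ∀ u v : X, ⟪Aψ u, v⟫ = ⟪u, Aψ v⟫)
    (hAψcomm : ∀ t : ℝ, ∀ u : X, Aψ (E t u) = E t (Aψ u))
    (hAψlb : ∀ s t : ℝ, 0 ≤ s → s ≤ t → ∀ c : ℝ, (∀ u ∈ Set.Icc s t, c ≤ ψ u) →
      ∀ x : X, c * ‖E t x - E s x‖ ≤ ‖Aψ (E t x - E s x)‖)
    (ν : ℝ) (hν0 : 0 < ν) (hν1 : ν ≤ 1)
    (C : ℝ) (hC : 0 < C)
    (hvar : ∀ x : X, ⟪xdag, x⟫ ≤ C * ‖Aφ x‖ ^ ν * ‖x‖ ^ (1 - ν))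
    (c μ : ℝ) (hc : 0 < c) (hμ0 : 0 < μ) (hμν : μ < ν)
    (hψφ : ∀ t ∈ Set.Ici (0:ℝ), c * φ t ^ μ ≤ ψ t) :
    ∃ w : X, Aψ w = xdag :=
  statement16_general L xdag E hEsa hEcomp hEtop hE0dag φ ψ hφmono hφcont hφnn Aφ Aψ hAφub hAψsa
    hAψcomm hAψlb ν hν0 C hC hvar c μ hc hμ0 hμν hψφ
end

section
/- Let φ : [0,∞) → [0,∞) be an increasing, continuous function with φ(0) = 0 and φ(λ) > 0 for all λ > 0, and let ν ∈ (0,1]. If there exist constants 0 < c ≤ C such that c·φ(λ)^{2ν} ≤ e(λ) ≤ C·φ(λ)^{2ν} for all λ > 0, then x† does NOT lie in the range of φ(L*L)^ν; i.e. the variational inequality and the two-sided spectral decay are compatible, but the standard source condition x† ∈ range(φ^ν(L*L)) fails (the candidate preimage ξ would satisfy ‖ξ‖² ≥ c − C + 2νc·log(φ(‖L‖²)/φ(Λ)) → ∞ as Λ → 0). -/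
/-!
Suppose `x† = A ξ`. Since `φ(λ)^{2ν} → 0` as `λ → 0`, below every scale `t > 0` there is a scale
`s < t` with `C φ(s)^{2ν} ≤ (c/2) φ(t)^{2ν}`; the two-sided decay then puts mass at least
`(c/2) φ(t)^{2ν}` of `x†` in the spectral band `(s, t]`. On that band `A` shrinks norms by at most
`φ(t)^ν`, so the band of `ξ` carries mass at least `c/2`. The bands are orthogonal, so iterating
towards `0` gives `‖E_t ξ‖² ≥ N c/2` for every `N`, which is impossible.
-/

open RealInnerProductSpace Filter Set Topology

theorem tendsto_rpow_nhdsGT_zero_of_continuousWithinAt {φ : ℝ → ℝ}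
    (hφ : ContinuousWithinAt φ (Ici 0) 0) (hφ0 : φ 0 = 0) {p : ℝ} (hp : 0 < p) :
    Tendsto (fun s => φ s ^ p) (𝓝[>] 0) (𝓝 0) := by
  have h := (hφ.rpow_const (Or.inr hp.le)).mono_left (nhdsWithin_mono 0 Ioi_subset_Ici_self)
  simpa only [hφ0, Real.zero_rpow hp.ne'] using h

section SpectralFamily

variable {X : Type*} [NormedAddCommGroup X] [InnerProductSpace ℝ X] {E : ℝ → X →L[ℝ] X}

theorem norm_sq_eq_norm_sq_add_norm_sq_sub_of_le
    (hEsa : ∀ t : ℝ, ∀ u v : X, ⟪E t u, v⟫ = ⟪u, E t v⟫)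
    (hEcomp : ∀ s t : ℝ, ∀ u : X, E s (E t u) = E (min s t) u) {s t : ℝ} (hst : s ≤ t)
    (u : X) : ‖E t u‖ ^ 2 = ‖E s u‖ ^ 2 + ‖E t u - E s u‖ ^ 2 := by
  have horth : ⟪E s u, E t u - E s u⟫ = 0 := by
    rw [inner_sub_right, hEsa, hEsa s u (E s u), hEcomp, hEcomp, min_eq_left hst, min_self,
      sub_self]
  have h := norm_add_sq_eq_norm_sq_add_norm_sq_real horth
  rw [add_sub_cancel] at h
  simpa only [sq] using h

theorem not_forall_exists_le_norm_sq_sub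
    (hEsa : ∀ t : ℝ, ∀ u v : X, ⟪E t u, v⟫ = ⟪u, E t v⟫)
    (hEcomp : ∀ s t : ℝ, ∀ u : X, E s (E t u) = E (min s t) u) {u : X} {δ : ℝ} (hδ : 0 < δ) :
    ¬ ∀ t > (0 : ℝ), ∃ s ∈ Ioo 0 t, δ ≤ ‖E t u - E s u‖ ^ 2 := by
  intro hband
  have hmass : ∀ N : ℕ, ∀ t > (0 : ℝ), N * δ ≤ ‖E t u‖ ^ 2 := by
    intro N
    induction N with
    | zero => intro t _; simp
    | succ N ih =>
      intro t ht
      obtain ⟨s, ⟨hs, hst⟩, hδs⟩ := hband t ht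
      rw [norm_sq_eq_norm_sq_add_norm_sq_sub_of_le hEsa hEcomp hst.le u]
      push_cast
      linarith [ih s hs]
  obtain ⟨N, hN⟩ := exists_nat_gt (‖E 1 u‖ ^ 2 / δ)
  rw [div_lt_iff₀ hδ] at hN
  linarith [hmass N 1 one_pos]

theorem le_norm_sq_sub_of_le_mul_sq {A : X →L[ℝ] X}
    (hAcomm : ∀ t : ℝ, ∀ u : X, A (E t u) = E t (A u)) {ξ : X} {s t K δ : ℝ} (hK : 0 < K)
    (hA : ‖A (E t ξ - E s ξ)‖ ≤ K * ‖E t ξ - E s ξ‖)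
    (hδ : δ * K ^ 2 ≤ ‖E t (A ξ) - E s (A ξ)‖ ^ 2) : δ ≤ ‖E t ξ - E s ξ‖ ^ 2 := by
  rw [map_sub, hAcomm, hAcomm] at hA
  have hsq : ‖E t (A ξ) - E s (A ξ)‖ ^ 2 ≤ K ^ 2 * ‖E t ξ - E s ξ‖ ^ 2 := by
    rw [← mul_pow]
    exact pow_le_pow_left₀ (norm_nonneg _) hA 2
  exact le_of_mul_le_mul_right (by linarith) (pow_pos hK 2)

end SpectralFamily

theorem statement17_general
    {X : Type*} [NormedAddCommGroup X] [InnerProductSpace ℝ X]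
    {Y : Type*} [NormedAddCommGroup Y] [InnerProductSpace ℝ Y]
    (L : X →L[ℝ] Y) (xdag : X)
    (E : ℝ → X →L[ℝ] X)
    (hEsa : ∀ t : ℝ, ∀ u v : X, ⟪E t u, v⟫ = ⟪u, E t v⟫)
    (hEcomp : ∀ s t : ℝ, ∀ u : X, E s (E t u) = E (min s t) u)
    (φ : ℝ → ℝ)
    (hφcont : ContinuousOn φ (Set.Ici 0)) (hφ0 : φ 0 = 0) (hφpos : ∀ t > (0:ℝ), 0 < φ t)
    (ν : ℝ) (hν0 : 0 < ν)
    (Aφν : X →L[ℝ] X)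
    (hAcomm : ∀ t : ℝ, ∀ u : X, Aφν (E t u) = E t (Aφν u))
    (hAub : ∀ s t : ℝ, 0 ≤ s → s ≤ t → ∀ x : X,
      ‖Aφν (E t x - E s x)‖ ≤ φ t ^ ν * ‖E t x - E s x‖)
    (c C : ℝ) (hc : 0 < c)
    (hdecay : ∀ t > (0:ℝ),
      c * φ t ^ (2 * ν) ≤ ‖E t xdag‖ ^ 2 ∧ ‖E t xdag‖ ^ 2 ≤ C * φ t ^ (2 * ν)) :
    ¬ ∃ ξ : X, Aφν ξ = xdag := by
  rintro ⟨ξ, rfl⟩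
  have hsmall : Tendsto (fun s => C * φ s ^ (2 * ν)) (𝓝[>] 0) (𝓝 0) := by
    simpa using (tendsto_rpow_nhdsGT_zero_of_continuousWithinAt (hφcont 0 self_mem_Ici) hφ0
      (by positivity)).const_mul C
  refine not_forall_exists_le_norm_sq_sub (u := ξ) hEsa hEcomp (half_pos hc) fun t ht => ?_
  have hφt : 0 < φ t ^ ν := Real.rpow_pos_of_pos (hφpos t ht) ν
  have hpow : φ t ^ (2 * ν) = (φ t ^ ν) ^ 2 := by
    rw [two_mul, Real.rpow_add (hφpos t ht), sq]
  obtain ⟨s, hCs, hs, hst⟩ := ((hsmall.eventually (gt_mem_nhds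
    (mul_pos (half_pos hc) (hpow ▸ pow_pos hφt 2)))).and (Ioo_mem_nhdsGT ht)).exists
  refine ⟨s, ⟨hs, hst⟩, le_norm_sq_sub_of_le_mul_sq hAcomm hφt (hAub s t hs.le hst.le ξ) ?_⟩
  have hpyth := norm_sq_eq_norm_sq_add_norm_sq_sub_of_le hEsa hEcomp hst.le (Aφν ξ)
  rw [← hpow]
  linarith [(hdecay t ht).1, (hdecay s hs).2]

theorem statement17
    {X : Type*} [NormedAddCommGroup X] [InnerProductSpace ℝ X] [CompleteSpace X]
    {Y : Type*} [NormedAddCommGroup Y] [InnerProductSpace ℝ Y] [CompleteSpace Y]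
    (L : X →L[ℝ] Y) (y : Y) (xdag : X)
    (hsol : L xdag = y) (hmin : ∀ x : X, L x = y → ‖xdag‖ ≤ ‖x‖)
    (E : ℝ → X →L[ℝ] X)
    (hEsa : ∀ t : ℝ, ∀ u v : X, ⟪E t u, v⟫ = ⟪u, E t v⟫)
    (hEcomp : ∀ s t : ℝ, ∀ u : X, E s (E t u) = E (min s t) u)
    (hEtop : ∀ t : ℝ, ‖L‖ ^ 2 ≤ t → ∀ u : X, E t u = u)
    (φ : ℝ → ℝ) (hφmono : MonotoneOn φ (Set.Ici 0))
    (hφcont : ContinuousOn φ (Set.Ici 0)) (hφ0 : φ 0 = 0) (hφpos : ∀ t > (0:ℝ), 0 < φ t)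
    (ν : ℝ) (hν0 : 0 < ν) (hν1 : ν ≤ 1)
    (Aφν : X →L[ℝ] X)
    (hAcomm : ∀ t : ℝ, ∀ u : X, Aφν (E t u) = E t (Aφν u))
    (hAub : ∀ s t : ℝ, 0 ≤ s → s ≤ t → ∀ x : X,
      ‖Aφν (E t x - E s x)‖ ≤ φ t ^ ν * ‖E t x - E s x‖)
    (c C : ℝ) (hc : 0 < c) (hcC : c ≤ C)
    (hdecay : ∀ t > (0:ℝ),
      c * φ t ^ (2 * ν) ≤ ‖E t xdag‖ ^ 2 ∧ ‖E t xdag‖ ^ 2 ≤ C * φ t ^ (2 * ν)) :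
    ¬ ∃ ξ : X, Aφν ξ = xdag :=
  statement17_general L xdag E hEsa hEcomp φ hφcont hφ0 hφpos ν hν0 Aφν hAcomm hAub c C hc hdecay
end

section
/- Let (r_α)_{α>0} be a generator of a regularisation method and let φ : [0,∞) → [0,∞) be an increasing, continuous function with φ(0) = 0 such that for some constant A > 0 the inequality √(ṙ_α(λ))·φ(λ) ≤ A·φ(α) holds for all λ > 0 and all α > 0. Let d_φ(R) := inf{‖x† − φ(L*L)ξ‖ : ξ ∈ X, ‖ξ‖ ≤ R} be the distance function, and let ν ∈ (0,1). Then the following are equivalent: (1) there exists C > 0 such that e(λ) ≤ C·φ(λ)^{2ν} for all λ > 0; (2) there exists C̃ > 0 such that d_φ(R) ≤ C̃·R^{−ν/(1−ν)} for all R > 0. (Proposition 5.3.) -/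
/-!
(2) ⇒ (1): for `‖ξ‖ ≤ R`, `‖E_t x†‖ ≤ ‖E_t (x† - φ(L*L) ξ)‖ + ‖φ(L*L) E_t ξ‖ ≤ d_φ(R) + φ(t) R`,
and the choice `R = φ(t)^(ν-1)` balances the two terms.

(1) ⇒ (2): choose levels `λ_j` with `φ(λ_j) = φ(b) / 2^j`, where `E_b x† = x†`, and invert
`φ(L*L)` on each spectral band `(λ_{j+1}, λ_j]`. The preimage of the band has norm at most
`‖E_{λ_j} x†‖ / φ(λ_{j+1}) ≲ φ(λ_j)^(ν-1)`, so the sum `ξ_N` of the first `N` of them has norm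
`≲ φ(λ_N)^(ν-1)` and leaves the residual `x† - φ(L*L) ξ_N = E_{λ_N} x†` of norm `≲ φ(λ_N)^ν`.
The radii `φ(λ_N)^(ν-1)` grow geometrically, so monotonicity of `d_φ` interpolates the bound to
every `R`.
-/

open Set Filter Topology Real RealInnerProductSpace

theorem sq_le_sq_mul_rpow_two_mul_iff {a c p ν : ℝ} (ha : 0 ≤ a) (hc : 0 ≤ c) (hp : 0 ≤ p) :
    a ^ 2 ≤ c ^ 2 * p ^ (2 * ν) ↔ a ≤ c * p ^ ν := by
  rw [mul_comm 2 ν, rpow_mul hp, rpow_two, ← mul_pow,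
    pow_le_pow_iff_left₀ ha (by positivity) two_ne_zero]

theorem rpow_sub_one_rpow_neg_div {p ν : ℝ} (hp : 0 ≤ p) (hν : ν ≠ 1) :
    (p ^ (ν - 1)) ^ (-(ν / (1 - ν))) = p ^ ν := by
  rw [← rpow_mul hp]
  congr 1
  have : 1 - ν ≠ 0 := sub_ne_zero.2 hν.symm
  field_simp
  ring

theorem le_add_one_mul_rpow_of_forall_le {a c p ν : ℝ} (hp : 0 ≤ p)
    (hν : ν ∈ Ioo 0 1) (h : ∀ R > 0, a ≤ c * R ^ (-(ν / (1 - ν))) + p * R) :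
    a ≤ (c + 1) * p ^ ν := by
  rcases hp.eq_or_lt with rfl | hp
  · have hlim : Tendsto (fun R : ℝ => c * R ^ (-(ν / (1 - ν))) + 0 * R) atTop (𝓝 0) := by
      simpa using (tendsto_rpow_neg_atTop (div_pos hν.1 (sub_pos.2 hν.2))).const_mul c
    rw [zero_rpow hν.1.ne', mul_zero]
    exact ge_of_tendsto hlim (eventually_gt_atTop 0 |>.mono h)
  · have key := h (p ^ (ν - 1)) (rpow_pos_of_pos hp _)
    rwa [rpow_sub_one_rpow_neg_div hp.le hν.2.ne, rpow_sub_one hp.ne', mul_div_cancel₀ _ hp.ne',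
      ← add_one_mul] at key

theorem exists_le_mul_rpow_neg_of_geometric {f : ℝ → ℝ} {B K s ρ D q : ℝ}
    (hf : AntitoneOn f (Ioi 0)) (hB : ∀ R > 0, f R ≤ B) (hB0 : 0 ≤ B) (hK : 0 < K) (hs : 0 < s)
    (hρ : 1 < ρ) (hD : 0 ≤ D) (hq : 0 ≤ q)
    (h : ∀ N : ℕ, f (K * (s * ρ ^ N)) ≤ D * (s * ρ ^ N) ^ (-q)) :
    ∃ C > 0, ∀ R > 0, f R ≤ C * R ^ (-q) := by
  refine ⟨B * (K * s) ^ q + D * (K * ρ) ^ q + 1, by positivity, fun R hR => ?_⟩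
  have hRq : 0 < R ^ (-q) := rpow_pos_of_pos hR _
  have hBR : 0 ≤ B * (K * s) ^ q * R ^ (-q) := by positivity
  have hDR : 0 ≤ D * (K * ρ) ^ q * R ^ (-q) := by positivity
  suffices f R ≤ B * (K * s) ^ q * R ^ (-q) ∨ f R ≤ D * (K * ρ) ^ q * R ^ (-q) by
    rcases this with h' | h' <;> nlinarith
  have hρK : 0 < K * ρ := by positivity
  rcases lt_or_ge R (K * s) with hRs | hRs
  · left
    calc f R ≤ B := hB R hR
      _ ≤ B * (K * s / R) ^ q :=
          le_mul_of_one_le_right hB0 (one_le_rpow ((one_le_div hR).2 hRs.le) hq)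
      _ = B * (K * s) ^ q * R ^ (-q) := by
          rw [div_rpow (by positivity) hR.le, rpow_neg hR.le]; ring
  · right
    obtain ⟨N, hN, hN1⟩ := exists_nat_pow_near ((one_le_div (by positivity)).2 hRs) hρ
    have hlow : K * (s * ρ ^ N) ≤ R := by
      rw [le_div_iff₀ (by positivity)] at hN; linarith
    have hup : R / (K * ρ) ≤ s * ρ ^ N := by
      rw [div_lt_iff₀ (by positivity), pow_succ] at hN1
      rw [div_le_iff₀ hρK]; nlinarith
    calc f R ≤ f (K * (s * ρ ^ N)) := hf (mem_Ioi.2 (by positivity)) hR hlow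
      _ ≤ D * (s * ρ ^ N) ^ (-q) := h N
      _ ≤ D * (R / (K * ρ)) ^ (-q) :=
          mul_le_mul_of_nonneg_left (rpow_le_rpow_of_nonpos (by positivity) hup (by linarith)) hD
      _ = D * (K * ρ) ^ q * R ^ (-q) := by
          rw [div_rpow hR.le hρK.le, rpow_neg hρK.le, div_inv_eq_mul]; ring

theorem div_two_pow_rpow_sub_one {δ : ℝ} (hδ : 0 ≤ δ) (ν : ℝ) (j : ℕ) :
    (δ / 2 ^ j) ^ (ν - 1) = δ ^ (ν - 1) * (2 ^ (1 - ν)) ^ j := by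
  rw [div_rpow hδ (by positivity), rpow_pow_comm zero_le_two, div_eq_mul_inv,
    ← rpow_neg (by positivity), neg_sub]

theorem div_add_sum_rpow_div_le {a c δ ν : ℝ} (ha : 0 ≤ a) (hc : 0 ≤ c) (hδ : 0 < δ) (hν : ν < 1)
    (N : ℕ) :
    a / δ + ∑ j ∈ Finset.range N, c * (δ / 2 ^ j) ^ ν / (δ / 2 ^ (j + 1)) ≤
      (a / (δ * δ ^ (ν - 1)) + 2 * c / (2 ^ (1 - ν) - 1)) * (δ ^ (ν - 1) * (2 ^ (1 - ν)) ^ N) := by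
  set ρ : ℝ := 2 ^ (1 - ν)
  have hρ : 1 < ρ := one_lt_rpow one_lt_two (sub_pos.2 hν)
  have hs : 0 < δ ^ (ν - 1) := rpow_pos_of_pos hδ _
  have hterm : ∀ j : ℕ, c * (δ / 2 ^ j) ^ ν / (δ / 2 ^ (j + 1)) = 2 * c * δ ^ (ν - 1) * ρ ^ j := by
    intro j
    have hp : 0 < δ / 2 ^ j := by positivity
    rw [mul_assoc, mul_assoc, ← div_two_pow_rpow_sub_one hδ.le, rpow_sub_one hp.ne', pow_succ,
      ← div_div]
    field_simp
  have hgeom : ∑ j ∈ Finset.range N, ρ ^ j ≤ ρ ^ N / (ρ - 1) := by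
    rw [geom_sum_eq hρ.ne']
    gcongr
    linarith
  have hρN : 1 ≤ ρ ^ N := one_le_pow₀ hρ.le
  simp only [hterm, ← Finset.mul_sum]
  calc a / δ + 2 * c * δ ^ (ν - 1) * ∑ j ∈ Finset.range N, ρ ^ j
      ≤ a / (δ * δ ^ (ν - 1)) * δ ^ (ν - 1) * ρ ^ N + 2 * c * δ ^ (ν - 1) * (ρ ^ N / (ρ - 1)) := by
        gcongr
        rw [← div_div, div_mul_cancel₀ _ hs.ne']
        exact le_mul_of_one_le_right (by positivity) hρN
    _ = _ := by ring

/-- For `A = φ(L*L)` this is the distance function `d_φ(R)`. -/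
noncomputable def distImageBall {X : Type*} [NormedAddCommGroup X] (A : X → X) (x : X) (R : ℝ) :
    ℝ :=
  ⨅ ξ : {ξ : X // ‖ξ‖ ≤ R}, ‖x - A ξ.1‖

section distImageBall

variable {X : Type*} [NormedAddCommGroup X] {A : X → X} {x : X} {R : ℝ}

theorem distImageBall_le {ξ : X} (hξ : ‖ξ‖ ≤ R) : distImageBall A x R ≤ ‖x - A ξ‖ :=
  ciInf_le ⟨0, by rintro _ ⟨_, rfl⟩; exact norm_nonneg _⟩ (⟨ξ, hξ⟩ : {ξ : X // ‖ξ‖ ≤ R})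

theorem le_distImageBall {c : ℝ} (hR : 0 ≤ R) (h : ∀ ξ, ‖ξ‖ ≤ R → c ≤ ‖x - A ξ‖) :
    c ≤ distImageBall A x R :=
  have : Nonempty {ξ : X // ‖ξ‖ ≤ R} := ⟨⟨0, by simpa using hR⟩⟩
  le_ciInf fun ξ => h ξ.1 ξ.2

theorem distImageBall_antitoneOn : AntitoneOn (distImageBall A x) (Ici 0) :=
  fun _ hR _ _ hRR' => le_distImageBall hR fun _ hξ => distImageBall_le (hξ.trans hRR')

end distImageBall

structure IsProjectionFamily {X : Type*} [NormedAddCommGroup X] [InnerProductSpace ℝ X]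
    (E : ℝ → X →L[ℝ] X) : Prop where
  isSymmetric : ∀ t, (E t : X →ₗ[ℝ] X).IsSymmetric
  apply_apply : ∀ s t u, E s (E t u) = E (min s t) u

namespace IsProjectionFamily

variable {X : Type*} [NormedAddCommGroup X] [InnerProductSpace ℝ X] {E : ℝ → X →L[ℝ] X}

theorem norm_sq_eq (hE : IsProjectionFamily E) (t : ℝ) (u : X) :
    ‖u‖ ^ 2 = ‖E t u‖ ^ 2 + ‖u - E t u‖ ^ 2 := by
  have horth : ⟪E t u, u - E t u⟫ = 0 := by
    rw [show ⟪E t u, u - E t u⟫ = ⟪u, E t (u - E t u)⟫ from hE.isSymmetric t _ _, map_sub,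
      hE.apply_apply, min_self, sub_self, inner_zero_right]
  have := norm_add_sq_eq_norm_sq_add_norm_sq_real horth
  rw [add_sub_cancel] at this
  simpa only [sq] using this

theorem norm_apply_le (hE : IsProjectionFamily E) (t : ℝ) (u : X) : ‖E t u‖ ≤ ‖u‖ :=
  (pow_le_pow_iff_left₀ (norm_nonneg _) (norm_nonneg _) two_ne_zero).1 <| by
    rw [hE.norm_sq_eq t u]; nlinarith [sq_nonneg ‖u - E t u‖]

theorem norm_sub_apply_le (hE : IsProjectionFamily E) {s t : ℝ} (hst : s ≤ t) (u : X) :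
    ‖E t u - E s u‖ ≤ ‖E t u‖ :=
  (pow_le_pow_iff_left₀ (norm_nonneg _) (norm_nonneg _) two_ne_zero).1 <| by
    rw [hE.norm_sq_eq s (E t u), hE.apply_apply, min_eq_left hst]; nlinarith [sq_nonneg ‖E s u‖]

end IsProjectionFamily

theorem exists_dyadic_levels {φ : ℝ → ℝ} (hφmono : MonotoneOn φ (Ici 0))
    (hφcont : ContinuousOn φ (Ici 0)) (hφ0 : φ 0 = 0) {b : ℝ} (hb : 0 ≤ b) (hφb : 0 < φ b) :
    ∃ l : ℕ → ℝ, Antitone l ∧ ∀ j, l j ∈ Ioc 0 b ∧ φ (l j) = φ b / 2 ^ j := by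
  have level : ∀ j : ℕ, ∃ l ∈ Ioc 0 b, φ l = φ b / 2 ^ j := by
    intro j
    have hpos : 0 < φ b / 2 ^ j := by positivity
    obtain ⟨l, hl, hφl⟩ := intermediate_value_Icc hb (hφcont.mono Icc_subset_Ici_self)
      ⟨hφ0 ▸ hpos.le, div_le_self hφb.le (one_le_pow₀ one_le_two)⟩
    refine ⟨l, ⟨hl.1.lt_of_ne ?_, hl.2⟩, hφl⟩
    rintro rfl
    rw [hφ0] at hφl
    exact hpos.ne hφl
  choose l hl hφl using level
  refine ⟨l, antitone_nat_of_succ_le fun j => (hφmono.reflect_lt (hl _).1.le (hl _).1.le ?_).le,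
    fun j => ⟨hl j, hφl j⟩⟩
  rw [hφl, hφl]
  exact div_lt_div_of_pos_left hφb (by positivity) (pow_lt_pow_right₀ one_lt_two j.lt_succ_self)

section Source

variable {X : Type*} [NormedAddCommGroup X] [InnerProductSpace ℝ X] {E : ℝ → X →L[ℝ] X}
  {A : X →L[ℝ] X} {φ : ℝ → ℝ}

theorem exists_apply_eq_sub_norm_le (hE : IsProjectionFamily E)
    (hAlb : ∀ s t : ℝ, 0 ≤ s → s ≤ t → ∀ x : X, φ s * ‖E t x - E s x‖ ≤ ‖A (E t x - E s x)‖)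
    (hAinv : ∀ s t : ℝ, 0 < s → s ≤ t → 0 < φ s → ∀ x : X,
      ∃ w : X, A w = E t x - E s x ∧ E t w - E s w = w)
    {s t : ℝ} (hs : 0 < s) (hst : s ≤ t) (hφs : 0 < φ s) (x : X) :
    ∃ w, A w = E t x - E s x ∧ ‖w‖ ≤ ‖E t x‖ / φ s := by
  obtain ⟨w, hAw, hw⟩ := hAinv s t hs hst hφs x
  refine ⟨w, hAw, (le_div_iff₀ hφs).2 ?_⟩
  calc ‖w‖ * φ s = φ s * ‖E t w - E s w‖ := by rw [hw, mul_comm]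
    _ ≤ ‖A (E t w - E s w)‖ := hAlb s t hs.le hst w
    _ = ‖E t x - E s x‖ := by rw [hw, hAw]
    _ ≤ ‖E t x‖ := hE.norm_sub_apply_le hst x

theorem exists_apply_eq_sub_of_antitone {x : X}
    (hband : ∀ s t, 0 < s → s ≤ t → 0 < φ s → ∃ w, A w = E t x - E s x ∧ ‖w‖ ≤ ‖E t x‖ / φ s)
    {b : ℝ} (hb : E b x = x) {l : ℕ → ℝ} (hl : Antitone l) (hl_pos : ∀ j, 0 < l j)
    (hφl : ∀ j, 0 < φ (l j)) (hl0 : l 0 ≤ b) (N : ℕ) :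
    ∃ ξ, A ξ = x - E (l N) x ∧
      ‖ξ‖ ≤ ‖x‖ / φ (l 0) + ∑ j ∈ Finset.range N, ‖E (l j) x‖ / φ (l (j + 1)) := by
  induction N with
  | zero =>
    obtain ⟨w, hAw, hw⟩ := hband _ _ (hl_pos 0) hl0 (hφl 0)
    rw [hb] at hAw hw
    exact ⟨w, hAw, by simpa using hw⟩
  | succ N ih =>
    obtain ⟨ξ, hAξ, hξ⟩ := ih
    obtain ⟨w, hAw, hw⟩ := hband _ _ (hl_pos (N + 1)) (hl N.le_succ) (hφl (N + 1))
    refine ⟨ξ + w, by rw [map_add, hAξ, hAw, sub_add_sub_cancel], ?_⟩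
    rw [Finset.sum_range_succ, ← add_assoc]
    exact (norm_add_le _ _).trans (add_le_add hξ hw)

theorem exists_distImageBall_le_rpow {x : X}
    (hband : ∀ s t, 0 < s → s ≤ t → 0 < φ s → ∃ w, A w = E t x - E s x ∧ ‖w‖ ≤ ‖E t x‖ / φ s)
    (hφmono : MonotoneOn φ (Ici 0)) (hφcont : ContinuousOn φ (Ici 0)) (hφ0 : φ 0 = 0)
    {b : ℝ} (hb0 : 0 < b) (hb : E b x = x) {c ν : ℝ} (hc : 0 < c) (hν : ν ∈ Ioo 0 1)
    (hx : ∀ t > 0, ‖E t x‖ ≤ c * φ t ^ ν) :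
    ∃ C > 0, ∀ R > 0, distImageBall A x R ≤ C * R ^ (-(ν / (1 - ν))) := by
  have hxA : ∀ R > 0, distImageBall A x R ≤ ‖x‖ := fun R hR => by
    simpa using distImageBall_le (A := A) (x := x) (ξ := 0) (by simpa using hR.le)
  rcases (hφ0 ▸ hφmono self_mem_Ici hb0.le hb0.le : 0 ≤ φ b).eq_or_lt with hφb | hδ
  · have hx0 : ‖x‖ ≤ 0 := by simpa [hb, ← hφb, zero_rpow hν.1.ne'] using hx b hb0
    exact ⟨1, one_pos, fun R hR => ((hxA R hR).trans hx0).trans (by positivity)⟩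
  obtain ⟨l, hl, hlφ⟩ := exists_dyadic_levels hφmono hφcont hφ0 hb0.le hδ
  have hφl : ∀ j, 0 < φ (l j) := fun j => (hlφ j).2 ▸ by positivity
  have hs : 0 < φ b ^ (ν - 1) := rpow_pos_of_pos hδ _
  have hρ : (1 : ℝ) < 2 ^ (1 - ν) := one_lt_rpow one_lt_two (sub_pos.2 hν.2)
  have hK : 0 < ‖x‖ / (φ b * φ b ^ (ν - 1)) + 2 * c / (2 ^ (1 - ν) - 1) :=
    add_pos_of_nonneg_of_pos (by positivity) (div_pos (by positivity) (sub_pos.2 hρ))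
  refine exists_le_mul_rpow_neg_of_geometric (distImageBall_antitoneOn.mono Ioi_subset_Ici_self)
    hxA (norm_nonneg x) hK hs hρ hc.le (div_pos hν.1 (sub_pos.2 hν.2)).le fun N => ?_
  obtain ⟨ξ, hAξ, hξ⟩ := exists_apply_eq_sub_of_antitone hband hb hl (fun j => (hlφ j).1.1) hφl
    (hlφ 0).1.2 N
  have hterm : ∀ j, ‖E (l j) x‖ / φ (l (j + 1)) ≤ c * (φ b / 2 ^ j) ^ ν / (φ b / 2 ^ (j + 1)) :=
    fun j => by
      rw [← (hlφ j).2, ← (hlφ (j + 1)).2]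
      exact div_le_div_of_nonneg_right (hx _ (hlφ j).1.1) (hφl _).le
  calc distImageBall A x _ ≤ ‖x - A ξ‖ := distImageBall_le <| hξ.trans <| by
        rw [(hlφ 0).2, pow_zero, div_one]
        exact (add_le_add le_rfl (Finset.sum_le_sum fun j _ => hterm j)).trans
          (div_add_sum_rpow_div_le (norm_nonneg x) hc.le hδ hν.2 N)
    _ = ‖E (l N) x‖ := by rw [hAξ, sub_sub_cancel]
    _ ≤ c * (φ b / 2 ^ N) ^ ν := by rw [← (hlφ N).2]; exact hx _ (hlφ N).1.1
    _ = c * (φ b ^ (ν - 1) * (2 ^ (1 - ν)) ^ N) ^ (-(ν / (1 - ν))) := by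
        rw [← div_two_pow_rpow_sub_one hδ.le, rpow_sub_one_rpow_neg_div (by positivity) hν.2.ne]

theorem norm_apply_le_distImageBall_add (hE : IsProjectionFamily E)
    (hAcomm : ∀ t : ℝ, ∀ u : X, A (E t u) = E t (A u)) {t : ℝ}
    (hA0ub : ∀ x : X, ‖A (E t x)‖ ≤ φ t * ‖E t x‖) (hφt : 0 ≤ φ t) (x : X) {R : ℝ} (hR : 0 ≤ R) :
    ‖E t x‖ ≤ distImageBall A x R + φ t * R := by
  rw [← sub_le_iff_le_add]
  refine le_distImageBall hR fun ξ hξ => ?_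
  calc ‖E t x‖ - φ t * R ≤ ‖E t x‖ - ‖E t (A ξ)‖ := by
        gcongr
        rw [← hAcomm]
        exact (hA0ub ξ).trans (mul_le_mul_of_nonneg_left ((hE.norm_apply_le t ξ).trans hξ) hφt)
    _ ≤ ‖E t x - E t (A ξ)‖ := norm_sub_norm_le _ _
    _ = ‖E t (x - A ξ)‖ := by rw [map_sub]
    _ ≤ ‖x - A ξ‖ := hE.norm_apply_le t _

end Source

theorem statement19_general
    {X : Type*} [NormedAddCommGroup X] [InnerProductSpace ℝ X]
    {Y : Type*} [NormedAddCommGroup Y] [InnerProductSpace ℝ Y]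
    (L : X →L[ℝ] Y) (xdag : X)
    (φ : ℝ → ℝ) (hφmono : MonotoneOn φ (Set.Ici 0))
    (hφcont : ContinuousOn φ (Set.Ici 0)) (hφ0 : φ 0 = 0)
    (E : ℝ → X →L[ℝ] X)
    (hEsa : ∀ t : ℝ, ∀ u v : X, ⟪E t u, v⟫ = ⟪u, E t v⟫)
    (hEcomp : ∀ s t : ℝ, ∀ u : X, E s (E t u) = E (min s t) u)
    (hEtop : ∀ t : ℝ, ‖L‖ ^ 2 ≤ t → ∀ u : X, E t u = u)
    (e : StieltjesFunction ℝ)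
    (he : ∀ t ∈ Set.Ici (0:ℝ), e t = ‖E t xdag‖ ^ 2)
    (Aφ : X →L[ℝ] X)
    (hAcomm : ∀ t : ℝ, ∀ u : X, Aφ (E t u) = E t (Aφ u))
    (hA0ub : ∀ t ∈ Set.Ici (0:ℝ), ∀ x : X, ‖Aφ (E t x)‖ ≤ φ t * ‖E t x‖)
    (hAlb : ∀ s t : ℝ, 0 ≤ s → s ≤ t → ∀ x : X,
      φ s * ‖E t x - E s x‖ ≤ ‖Aφ (E t x - E s x)‖)
    (hAinv : ∀ s t : ℝ, 0 < s → s ≤ t → 0 < φ s → ∀ x : X,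
      ∃ w : X, Aφ w = E t x - E s x ∧ E t w - E s w = w)
    (ν : ℝ) (hν : ν ∈ Set.Ioo (0:ℝ) 1) :
    (∃ C : ℝ, 0 < C ∧ ∀ t > (0:ℝ), e t ≤ C * φ t ^ (2 * ν))
    ↔ (∃ Ct : ℝ, 0 < Ct ∧ ∀ R > (0:ℝ),
        (⨅ ξ : {ξ : X // ‖ξ‖ ≤ R}, ‖xdag - Aφ ξ.1‖) ≤ Ct * R ^ (-(ν / (1 - ν)))) := by
  have hE : IsProjectionFamily E := ⟨hEsa, hEcomp⟩
  have hφnn : ∀ t ≥ 0, 0 ≤ φ t := fun t ht => hφ0 ▸ hφmono self_mem_Ici ht ht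
  constructor
  · rintro ⟨C, hC, hCe⟩
    have hx : ∀ t > 0, ‖E t xdag‖ ≤ √C * φ t ^ ν := fun t ht =>
      (sq_le_sq_mul_rpow_two_mul_iff (norm_nonneg _) (sqrt_nonneg C) (hφnn t ht.le)).1 <| by
        rw [sq_sqrt hC.le, ← he t ht.le]; exact hCe t ht
    exact exists_distImageBall_le_rpow
      (fun s t hs hst hφs => exists_apply_eq_sub_norm_le hE hAlb hAinv hs hst hφs xdag)
      hφmono hφcont hφ0 (by positivity : 0 < ‖L‖ ^ 2 + 1)
      (hEtop _ (le_add_of_nonneg_right zero_le_one) xdag) (sqrt_pos.2 hC) hν hx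
  · rintro ⟨Ct, hCt, hd⟩
    refine ⟨(Ct + 1) ^ 2, by positivity, fun t ht => ?_⟩
    rw [he t ht.le, sq_le_sq_mul_rpow_two_mul_iff (norm_nonneg _) (by positivity) (hφnn t ht.le)]
    refine le_add_one_mul_rpow_of_forall_le (hφnn t ht.le) hν fun R hR => ?_
    have := norm_apply_le_distImageBall_add hE hAcomm (hA0ub t ht.le) (hφnn t ht.le) xdag hR.le
    linarith [show distImageBall Aφ xdag R ≤ _ from hd R hR]

theorem statement19
    {X : Type*} [NormedAddCommGroup X] [InnerProductSpace ℝ X] [CompleteSpace X]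
    {Y : Type*} [NormedAddCommGroup Y] [InnerProductSpace ℝ Y] [CompleteSpace Y]
    (L : X →L[ℝ] Y) (y : Y) (xdag : X)
    (hsol : L xdag = y) (hmin : ∀ x : X, L x = y → ‖xdag‖ ≤ ‖x‖)
    (r : ℝ → ℝ → ℝ) (ρ ρt : ℝ) (hρ0 : 0 < ρ) (hρ1 : ρ < 1) (hρt0 : 0 < ρt) (hρt1 : ρt < 1)
    (hrcont : ∀ α > (0:ℝ), ContinuousOn (r α) (Set.Ici 0))
    (hrnonneg : ∀ α > (0:ℝ), ∀ t ∈ Set.Ici (0:ℝ), 0 ≤ r α t)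
    (hrbound : ∀ α > (0:ℝ), ∀ t > (0:ℝ), r α t ≤ min (1 / t) (ρ / Real.sqrt (α * t)))
    (hrt_anti : ∀ α > (0:ℝ), AntitoneOn (fun t => (1 - t * r α t) ^ 2) (Set.Ici 0))
    (hrt_cont : ∀ t ∈ Set.Ici (0:ℝ), ContinuousOn (fun α => (1 - t * r α t) ^ 2) (Set.Ioi 0))
    (hrt_mono : ∀ t ∈ Set.Ici (0:ℝ), MonotoneOn (fun α => (1 - t * r α t) ^ 2) (Set.Ioi 0))
    (hrt_lt : ∀ α > (0:ℝ), (1 - α * r α α) ^ 2 < ρt)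
    (xa : ℝ → X)
    (φ : ℝ → ℝ) (hφmono : MonotoneOn φ (Set.Ici 0))
    (hφcont : ContinuousOn φ (Set.Ici 0)) (hφ0 : φ 0 = 0)
    (hφnn : ∀ t ∈ Set.Ici (0:ℝ), 0 ≤ φ t)
    (A : ℝ) (hA : 0 < A)
    (hqual : ∀ α > (0:ℝ), ∀ t > (0:ℝ), Real.sqrt ((1 - t * r α t) ^ 2) * φ t ≤ A * φ α)
    (E : ℝ → X →L[ℝ] X)
    (hEsa : ∀ t : ℝ, ∀ u v : X, ⟪E t u, v⟫ = ⟪u, E t v⟫)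
    (hEcomp : ∀ s t : ℝ, ∀ u : X, E s (E t u) = E (min s t) u)
    (hEtop : ∀ t : ℝ, ‖L‖ ^ 2 ≤ t → ∀ u : X, E t u = u)
    (hE0dag : E 0 xdag = 0)
    (hEr : ∀ u : X, ∀ t : ℝ, Tendsto (fun s => E s u) (nhdsWithin t (Set.Ioi t)) (nhds (E t u)))
    (e : StieltjesFunction ℝ)
    (he : ∀ t ∈ Set.Ici (0:ℝ), e t = ‖E t xdag‖ ^ 2)
    (hint : ∀ α > (0:ℝ),
      ‖xa α - xdag‖ ^ 2 = ∫ t in Set.Ioc (0:ℝ) (‖L‖ ^ 2), (1 - t * r α t) ^ 2 ∂e.measure)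
    (Aφ : X →L[ℝ] X)
    (hAsa : ∀ u v : X, ⟪Aφ u, v⟫ = ⟪u, Aφ v⟫)
    (hAcomm : ∀ t : ℝ, ∀ u : X, Aφ (E t u) = E t (Aφ u))
    (hA0ub : ∀ t ∈ Set.Ici (0:ℝ), ∀ x : X, ‖Aφ (E t x)‖ ≤ φ t * ‖E t x‖)
    (hAub : ∀ s t : ℝ, 0 ≤ s → s ≤ t → ∀ x : X,
      ‖Aφ (E t x - E s x)‖ ≤ φ t * ‖E t x - E s x‖)
    (hAlb : ∀ s t : ℝ, 0 ≤ s → s ≤ t → ∀ x : X,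
      φ s * ‖E t x - E s x‖ ≤ ‖Aφ (E t x - E s x)‖)
    (hAinv : ∀ s t : ℝ, 0 < s → s ≤ t → 0 < φ s → ∀ x : X,
      ∃ w : X, Aφ w = E t x - E s x ∧ E t w - E s w = w)
    (T : ℝ → X →L[ℝ] X)
    (hT : ∀ α > (0:ℝ), xa α - xdag = T α xdag)
    (hTnorm : ∀ α > (0:ℝ), ∀ c : ℝ, 0 ≤ c →
      (∀ t ∈ Set.Icc (0:ℝ) (‖L‖ ^ 2), Real.sqrt ((1 - t * r α t) ^ 2) ≤ c) →
      ∀ z : X, ‖T α z‖ ≤ c * ‖z‖)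
    (hTA : ∀ α > (0:ℝ), ∀ c : ℝ, 0 ≤ c →
      (∀ t ∈ Set.Icc (0:ℝ) (‖L‖ ^ 2), Real.sqrt ((1 - t * r α t) ^ 2) * φ t ≤ c) →
      ∀ ξ : X, ‖T α (Aφ ξ)‖ ≤ c * ‖ξ‖)
    (ν : ℝ) (hν : ν ∈ Set.Ioo (0:ℝ) 1) :
    (∃ C : ℝ, 0 < C ∧ ∀ t > (0:ℝ), e t ≤ C * φ t ^ (2 * ν))
    ↔ (∃ Ct : ℝ, 0 < Ct ∧ ∀ R > (0:ℝ),
        (⨅ ξ : {ξ : X // ‖ξ‖ ≤ R}, ‖xdag - Aφ ξ.1‖) ≤ Ct * R ^ (-(ν / (1 - ν)))) :=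
  statement19_general L xdag φ hφmono hφcont hφ0 E hEsa hEcomp hEtop e he Aφ hAcomm hA0ub hAlb hAinv
    ν hν
end
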